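/- arXiv:1810.03384 — 3 statements merged into one kernel-verified Lean document; each statement's English description precedes it below -/
import Mathlib

section
/- Margulis–Russo formula: For every n ∈ ℕ, every increasing boolean function f : {0,1}^n → {0,1}, and every p ∈ (0,1), the function p ↦ 𝔼_p[f] is differentiable and its derivative at p equals the sum of the influences: (d/dp) 𝔼_p[f] = Σ_{i=1}^n Inf_i[f], where the influences are computed under ℙ_p. -/
/-!
Differentiating the product weight `∏ i, (p or 1 - p)` coordinate by coordinate shows that
`d/dp 𝔼_p[g] = ∑ i, 𝔼_p[D_i g]`, where `D_i g(ω) = g(ω with ω_i = 1) - g(ω with ω_i = 0)`: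
the `i`-th term of the product rule is the weight of the other coordinates times `±g(ω)`,
and pairing `ω` with `Flip_i ω` (which share that weight, and whose full weights add up to it)
turns it into `𝔼_p[D_i g]`. For increasing `f` the discrete derivative `D_i f` is nonnegative,
so it equals `|f(ω) - f(Flip_i ω)|` and `𝔼_p[D_i f] = Inf_i[f]`.
-/

open scoped Classical

section BooleanAnalysis

variable {ι : Type*} [Fintype ι] [DecidableEq ι]

/-- The Bernoulli(`p`) product weight of a configuration `ω ∈ {0,1}^ι`:
`∏ i, p^{ω i}(1-p)^{1-ω i}`.  Summing a function against these weights gives its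
expectation under the product measure `ℙ_p`. -/
noncomputable def bernoulliWeight (p : ℝ) (ω : ι → Bool) : ℝ :=
  ∏ i : ι, if ω i then p else 1 - p

/-- Expectation `𝔼_p[g]` of `g : {0,1}^ι → ℝ` under the product Bernoulli(`p`) measure. -/
noncomputable def bernoulliExp (p : ℝ) (g : (ι → Bool) → ℝ) : ℝ :=
  ∑ ω : ι → Bool, bernoulliWeight p ω * g ω

/-- The `{0,1}`-valued (real) indicator of a boolean function. -/
noncomputable def boolInd (f : (ι → Bool) → Bool) (ω : ι → Bool) : ℝ :=
  if f ω then 1 else 0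

/-- `f(p) := 𝔼_p[f]` for a boolean function `f`. -/
noncomputable def bernoulliMean (p : ℝ) (f : (ι → Bool) → Bool) : ℝ :=
  bernoulliExp p (boolInd f)

/-- The variance `Var_p(f)` of a boolean function under `ℙ_p`. -/
noncomputable def bernoulliVar (p : ℝ) (f : (ι → Bool) → Bool) : ℝ :=
  bernoulliExp p (fun ω => (boolInd f ω - bernoulliMean p f) ^ 2)

/-- `Flip_i(ω)`: flip the `i`-th coordinate of `ω`. -/
def flipCoord (i : ι) (ω : ι → Bool) : ι → Bool :=
  Function.update ω i (!ω i)

/-- The influence `Inf_i[f] := 𝔼_p[|f(ω) - f(Flip_i ω)|]` of coordinate `i`, under `ℙ_p`. -/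
noncomputable def influence (p : ℝ) (f : (ι → Bool) → Bool) (i : ι) : ℝ :=
  bernoulliExp p (fun ω => |boolInd f ω - boolInd f (flipCoord i ω)|)

/-- A boolean function is increasing if it is monotone w.r.t. the coordinatewise
partial order on `{0,1}^ι` (with `false ≤ true`). -/
def IncreasingBoolFun (f : (ι → Bool) → Bool) : Prop :=
  ∀ ω ω' : ι → Bool, (∀ i, ω i ≤ ω' i) → f ω ≤ f ω'

end BooleanAnalysis

section MargulisRusso

variable {ι : Type*}

theorem IncreasingBoolFun.boolInd_le {f : (ι → Bool) → Bool} (hf : IncreasingBoolFun f)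
    {ω ω' : ι → Bool} (h : ∀ j, ω j ≤ ω' j) : boolInd f ω ≤ boolInd f ω' := by
  have hle := hf ω ω' h
  unfold boolInd
  split_ifs <;> simp_all [Bool.le_iff_imp]

variable [DecidableEq ι]

theorem flipCoord_apply_self (i : ι) (ω : ι → Bool) : flipCoord i ω i = !ω i := by
  simp [flipCoord]

theorem flipCoord_apply_of_ne {i j : ι} (ω : ι → Bool) (h : j ≠ i) :
    flipCoord i ω j = ω j :=
  Function.update_of_ne h _ _

theorem flipCoord_involutive (i : ι) : Function.Involutive (flipCoord i) := fun ω => by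
  funext j
  by_cases h : j = i
  · subst h; simp [flipCoord_apply_self]
  · simp [flipCoord_apply_of_ne _ h]

theorem flipCoord_le_of_apply_eq_true {i : ι} {ω : ι → Bool} (h : ω i = true) (j : ι) :
    flipCoord i ω j ≤ ω j := by
  by_cases hj : j = i
  · subst hj; simp [flipCoord_apply_self, h]
  · rw [flipCoord_apply_of_ne _ hj]

theorem le_flipCoord_of_apply_eq_false {i : ι} {ω : ι → Bool} (h : ω i = false) (j : ι) :
    ω j ≤ flipCoord i ω j := by
  by_cases hj : j = i
  · subst hj; simp [flipCoord_apply_self, h]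
  · rw [flipCoord_apply_of_ne _ hj]

/-- The derivative in `p` of the factor `if ω i then p else 1 - p` of the weight. -/
def coordSign (i : ι) (ω : ι → Bool) : ℝ :=
  if ω i then 1 else -1

/-- The discrete derivative `D_i g(ω) = g(ω with ω_i = 1) - g(ω with ω_i = 0)`. -/
noncomputable def coordDeriv (i : ι) (g : (ι → Bool) → ℝ) (ω : ι → Bool) : ℝ :=
  coordSign i ω * (g ω - g (flipCoord i ω))

theorem coordSign_flipCoord (i : ι) (ω : ι → Bool) :
    coordSign i (flipCoord i ω) = -coordSign i ω := by
  simp only [coordSign, flipCoord_apply_self]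
  cases ω i <;> simp

theorem coordDeriv_flipCoord (i : ι) (g : (ι → Bool) → ℝ) (ω : ι → Bool) :
    coordDeriv i g (flipCoord i ω) = coordDeriv i g ω := by
  rw [coordDeriv, coordDeriv, coordSign_flipCoord, flipCoord_involutive i ω]
  ring

theorem IncreasingBoolFun.coordDeriv_boolInd {f : (ι → Bool) → Bool} (hf : IncreasingBoolFun f)
    (i : ι) (ω : ι → Bool) :
    coordDeriv i (boolInd f) ω = |boolInd f ω - boolInd f (flipCoord i ω)| := by
  rw [coordDeriv, coordSign]
  cases hi : ω i
  · have := hf.boolInd_le (le_flipCoord_of_apply_eq_false hi)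
    rw [abs_of_nonpos (by linarith)]
    simp
  · have := hf.boolInd_le (flipCoord_le_of_apply_eq_true hi)
    rw [abs_of_nonneg (by linarith)]
    simp

variable [Fintype ι]

theorem sum_comp_flipCoord {M : Type*} [AddCommMonoid M] (i : ι) (g : (ι → Bool) → M) :
    ∑ ω, g (flipCoord i ω) = ∑ ω, g ω :=
  Fintype.sum_equiv (flipCoord_involutive i).toPerm _ _ fun _ => rfl

noncomputable def bernoulliWeightErase (p : ℝ) (i : ι) (ω : ι → Bool) : ℝ :=
  ∏ j ∈ Finset.univ.erase i, if ω j then p else 1 - p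

theorem bernoulliWeight_eq_mul_erase (p : ℝ) (i : ι) (ω : ι → Bool) :
    bernoulliWeight p ω = (if ω i then p else 1 - p) * bernoulliWeightErase p i ω :=
  (Finset.mul_prod_erase _ _ (Finset.mem_univ i)).symm

theorem bernoulliWeightErase_flipCoord (p : ℝ) (i : ι) (ω : ι → Bool) :
    bernoulliWeightErase p i (flipCoord i ω) = bernoulliWeightErase p i ω :=
  Finset.prod_congr rfl fun _ hj => by rw [flipCoord_apply_of_ne _ (Finset.ne_of_mem_erase hj)]

theorem bernoulliWeight_add_flipCoord (p : ℝ) (i : ι) (ω : ι → Bool) :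
    bernoulliWeight p ω + bernoulliWeight p (flipCoord i ω) = bernoulliWeightErase p i ω := by
  rw [bernoulliWeight_eq_mul_erase p i, bernoulliWeight_eq_mul_erase p i (flipCoord i ω),
    bernoulliWeightErase_flipCoord, flipCoord_apply_self]
  cases ω i <;> simp only [Bool.not_false, Bool.not_true, Bool.false_eq_true, ↓reduceIte] <;> ring

theorem two_mul_bernoulliExp_coordDeriv (p : ℝ) (i : ι) (g : (ι → Bool) → ℝ) :
    2 * bernoulliExp p (coordDeriv i g)
      = ∑ ω, bernoulliWeightErase p i ω * coordDeriv i g ω := by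
  calc 2 * bernoulliExp p (coordDeriv i g)
      = ∑ ω, bernoulliWeight p ω * coordDeriv i g ω
        + ∑ ω, bernoulliWeight p (flipCoord i ω) * coordDeriv i g (flipCoord i ω) := by
        rw [sum_comp_flipCoord i fun ω => bernoulliWeight p ω * coordDeriv i g ω, bernoulliExp]
        ring
    _ = ∑ ω, bernoulliWeightErase p i ω * coordDeriv i g ω := by
        simp only [coordDeriv_flipCoord, ← Finset.sum_add_distrib, ← add_mul,
          bernoulliWeight_add_flipCoord]

theorem two_mul_sum_bernoulliWeightErase_mul_coordSign (p : ℝ) (i : ι) (g : (ι → Bool) → ℝ) :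
    2 * ∑ ω, bernoulliWeightErase p i ω * coordSign i ω * g ω
      = ∑ ω, bernoulliWeightErase p i ω * coordDeriv i g ω := by
  rw [two_mul]
  nth_rewrite 2 [← sum_comp_flipCoord i]
  rw [← Finset.sum_add_distrib]
  refine Finset.sum_congr rfl fun ω _ => ?_
  rw [coordDeriv, bernoulliWeightErase_flipCoord, coordSign_flipCoord]
  ring

theorem hasDerivAt_bernoulliWeight (p : ℝ) (ω : ι → Bool) :
    HasDerivAt (fun q => bernoulliWeight q ω)
      (∑ i, bernoulliWeightErase p i ω * coordSign i ω) p := by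
  refine HasDerivAt.fun_finsetProd fun i _ => ?_
  unfold coordSign
  cases ω i
  · simpa using (hasDerivAt_id' p).const_sub 1
  · simpa using hasDerivAt_id' p

theorem hasDerivAt_bernoulliExp (p : ℝ) (g : (ι → Bool) → ℝ) :
    HasDerivAt (fun q => bernoulliExp q g) (∑ i, bernoulliExp p (coordDeriv i g)) p := by
  refine (HasDerivAt.fun_sum fun ω (_ : ω ∈ Finset.univ) =>
    (hasDerivAt_bernoulliWeight p ω).mul_const (g ω)).congr_deriv ?_
  simp only [Finset.sum_mul]
  rw [Finset.sum_comm]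
  refine Finset.sum_congr rfl fun i _ => ?_
  linarith [two_mul_bernoulliExp_coordDeriv p i g,
    two_mul_sum_bernoulliWeightErase_mul_coordSign p i g]

end MargulisRusso

theorem margulis_russo_general (n : ℕ) (f : (Fin n → Bool) → Bool) (hf : IncreasingBoolFun f)
    (p : ℝ) :
    HasDerivAt (fun q : ℝ => bernoulliMean q f) (∑ i : Fin n, influence p f i) p := by
  have influence_eq (i : Fin n) : influence p f i = bernoulliExp p (coordDeriv i (boolInd f)) :=
    congrArg (bernoulliExp p) (funext fun ω => (hf.coordDeriv_boolInd i ω).symm)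
  simpa only [bernoulliMean, influence_eq] using hasDerivAt_bernoulliExp p (boolInd f)

/-- **Margulis–Russo formula.** -/
theorem margulis_russo (n : ℕ) (f : (Fin n → Bool) → Bool) (hf : IncreasingBoolFun f)
    (p : ℝ) (hp : p ∈ Set.Ioo (0 : ℝ) 1) :
    HasDerivAt (fun q : ℝ => bernoulliMean q f) (∑ i : Fin n, influence p f i) p :=
  margulis_russo_general n f hf p
end

section
/- OSSS inequality: Let p ∈ [0,1], n ∈ ℕ, let f : {0,1}^n → {0,1} be an increasing boolean function and let T be any algorithm (decision tree) on {0,1}^n. Then Var_p(f) ≤ p(1−p) Σ_{i=1}^n δ_i(T) · Inf_i[f], where δ_i(T) is the revealment of coordinate i for T under ℙ_p. -/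
open scoped Classical

section DecisionTree

variable {ι : Type*} [Fintype ι] [DecidableEq ι]

/-- The history (queried coordinates together with the revealed values) after `t` steps of
the algorithm with decision rule `ψ` run on the input `ω`.  The decision rule `ψ` gives the
next queried coordinate as a function of the history so far (`ψ [] = i₁` is the first,
deterministic, query). -/
def algHistory (ψ : List (ι × Bool) → ι) (ω : ι → Bool) : ℕ → List (ι × Bool)
  | 0 => []
  | t + 1 =>
    algHistory ψ ω t ++ [(ψ (algHistory ψ ω t), ω (ψ (algHistory ψ ω t)))]

/-- `algQuery ψ ω t` is the `(t+1)`-st coordinate queried by the algorithm on input `ω`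
(indexed from `t = 0`). -/
def algQuery (ψ : List (ι × Bool) → ι) (ω : ι → Bool) (t : ℕ) : ι :=
  ψ (algHistory ψ ω t)

/-- Validity of a decision rule: on any input, the queried coordinates
`i_1(ω), …, i_n(ω)` are pairwise distinct (so they enumerate all of `ι`). -/
def IsDecisionTree (ψ : List (ι × Bool) → ι) : Prop :=
  ∀ ω : ι → Bool, ∀ s t : ℕ, s < t → t < Fintype.card ι → algQuery ψ ω s ≠ algQuery ψ ω t

/-- The stopping time `τ(ω)`: the least `t ≥ 1` such that the values revealed during the
first `t` queries determine the value `f(ω)`. -/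
noncomputable def algStoppingTime (f : (ι → Bool) → Bool) (ψ : List (ι × Bool) → ι)
    (ω : ι → Bool) : ℕ :=
  sInf {t : ℕ | 1 ≤ t ∧ ∀ x : ι → Bool,
    (∀ s < t, x (algQuery ψ ω s) = ω (algQuery ψ ω s)) → f x = f ω}

/-- The revealment `δ_i(T) := ℙ_p[∃ t ≤ τ(ω), i_t(ω) = i]`: the probability that
coordinate `i` is queried before the algorithm determines `f`. -/
noncomputable def revealment (p : ℝ) (f : (ι → Bool) → Bool) (ψ : List (ι × Bool) → ι)
    (i : ι) : ℝ :=
  bernoulliExp p (fun ω =>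
    if ∃ t < algStoppingTime f ψ ω, algQuery ψ ω t = i then 1 else 0)

end DecisionTree

namespace OSSSProof
set_option linter.unusedSectionVars false

open Finset Function

variable {ι : Type*} [Fintype ι] [DecidableEq ι]

noncomputable def w (p : ℝ) (b : Bool) : ℝ := if b then p else 1 - p

noncomputable def boolR (b : Bool) : ℝ := if b then 1 else 0

lemma bw_eq (p : ℝ) (ω : ι → Bool) : bernoulliWeight p ω = ∏ i, w p (ω i) := rfl

lemma sum_bw (p : ℝ) : ∑ ω : ι → Bool, bernoulliWeight p ω = 1 := by
  classical
  have h := Finset.prod_univ_sum (fun _ : ι => (Finset.univ : Finset Bool)) (fun _ b => w p b)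
  rw [Fintype.piFinset_univ] at h
  calc ∑ ω : ι → Bool, bernoulliWeight p ω = ∑ x : ι → Bool, ∏ i, w p (x i) :=
        Finset.sum_congr rfl fun x _ => bw_eq p x
    _ = ∏ _i : ι, ∑ b : Bool, w p b := h.symm
    _ = 1 := by
        have hb : ∑ b : Bool, w p b = 1 := by rw [Fintype.sum_bool]; simp [w]
        rw [Finset.prod_congr rfl fun i _ => hb, Finset.prod_const_one]

lemma w_nonneg {p : ℝ} (hp : p ∈ Set.Icc (0:ℝ) 1) (b : Bool) : 0 ≤ w p b := by
  rcases hp with ⟨h0, h1⟩; cases b <;> simp [w] <;> linarith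

lemma bw_nonneg {p : ℝ} (hp : p ∈ Set.Icc (0:ℝ) 1) (ω : ι → Bool) :
    0 ≤ bernoulliWeight p ω := by
  rw [bw_eq]; exact Finset.prod_nonneg fun i _ => w_nonneg hp _

lemma boolInd_mul_self (f : (ι → Bool) → Bool) (ω : ι → Bool) :
    boolInd f ω * boolInd f ω = boolInd f ω := by
  cases h : f ω <;> simp [boolInd, h]

lemma boolInd_nonneg (f : (ι → Bool) → Bool) (ω : ι → Bool) : 0 ≤ boolInd f ω := by
  cases h : f ω <;> simp [boolInd, h]

lemma boolInd_le_one (f : (ι → Bool) → Bool) (ω : ι → Bool) : boolInd f ω ≤ 1 := by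
  cases h : f ω <;> simp [boolInd, h]

/-- the discrete derivative of `f` at coordinate `i` (as a real number) -/
noncomputable def gI (f : (ι → Bool) → Bool) (i : ι) (x : ι → Bool) : ℝ :=
  boolInd f (Function.update x i true) - boolInd f (Function.update x i false)

lemma gI_nonneg {f : (ι → Bool) → Bool} (hf : IncreasingBoolFun f) (i : ι) (x : ι → Bool) :
    0 ≤ gI f i x := by
  have hle : f (Function.update x i false) ≤ f (Function.update x i true) := by
    apply hf
    intro j
    rcases eq_or_ne j i with rfl | hne
    · simp
    · simp [Function.update_of_ne hne]
  unfold gI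
  cases h1 : f (Function.update x i true) <;> cases h2 : f (Function.update x i false) <;>
      rw [h1, h2] at hle <;> simp [boolInd, h1, h2] <;> exact absurd hle (by decide)

lemma gI_le_one (f : (ι → Bool) → Bool) (i : ι) (x : ι → Bool) : gI f i x ≤ 1 := by
  unfold gI
  have := boolInd_le_one f (Function.update x i true)
  have := boolInd_nonneg f (Function.update x i false)
  linarith

lemma gI_update (f : (ι → Bool) → Bool) (i : ι) (x : ι → Bool) (c : Bool) :
    gI f i (Function.update x i c) = gI f i x := by
  simp [gI, Function.update_idem]

lemma gI_eq_abs {f : (ι → Bool) → Bool} (hf : IncreasingBoolFun f) (i : ι) (x : ι → Bool) :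
    |boolInd f x - boolInd f (flipCoord i x)| = gI f i x := by
  cases h : x i
  · have h1 : Function.update x i false = x := by rw [← h]; exact Function.update_eq_self i x
    have h2 : flipCoord i x = Function.update x i true := by simp [flipCoord, h]
    have h0 : 0 ≤ boolInd f (Function.update x i true) - boolInd f x := by
      have hg := gI_nonneg hf i x; unfold gI at hg; rwa [h1] at hg
    unfold gI
    rw [h2, h1, abs_sub_comm]
    exact abs_of_nonneg h0
  · have h1 : Function.update x i true = x := by rw [← h]; exact Function.update_eq_self i x
    have h2 : flipCoord i x = Function.update x i false := by simp [flipCoord, h]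
    have h0 : 0 ≤ boolInd f x - boolInd f (Function.update x i false) := by
      have hg := gI_nonneg hf i x; unfold gI at hg; rwa [h1] at hg
    unfold gI
    rw [h2, h1]
    exact abs_of_nonneg h0

lemma influence_eq {f : (ι → Bool) → Bool} (hf : IncreasingBoolFun f) (p : ℝ) (i : ι) :
    influence p f i = ∑ x : ι → Bool, bernoulliWeight p x * gI f i x := by
  unfold influence bernoulliExp
  simp only [gI_eq_abs hf]

end OSSSProof
namespace OSSSProof
set_option linter.unusedSectionVars false

variable {ι : Type*} [Fintype ι] [DecidableEq ι]

section History

variable (ψ : List (ι × Bool) → ι)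

lemma algHistory_congr (ω ω' : ι → Bool) (t : ℕ)
    (h : ∀ s < t, ω' (algQuery ψ ω s) = ω (algQuery ψ ω s)) :
    algHistory ψ ω' t = algHistory ψ ω t := by
  induction t with
  | zero => rfl
  | succ t ih =>
    have ht : algHistory ψ ω' t = algHistory ψ ω t :=
      ih fun s hs => h s (hs.trans (Nat.lt_succ_self t))
    show algHistory ψ ω' t ++ [(ψ (algHistory ψ ω' t), ω' (ψ (algHistory ψ ω' t)))]
      = algHistory ψ ω t ++ [(ψ (algHistory ψ ω t), ω (ψ (algHistory ψ ω t)))]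
    rw [ht]
    have hv : ω' (ψ (algHistory ψ ω t)) = ω (ψ (algHistory ψ ω t)) :=
      h t (Nat.lt_succ_self t)
    rw [hv]

lemma algQuery_congr (ω ω' : ι → Bool) {t : ℕ}
    (h : ∀ s < t, ω' (algQuery ψ ω s) = ω (algQuery ψ ω s)) {s : ℕ} (hs : s ≤ t) :
    algQuery ψ ω' s = algQuery ψ ω s := by
  unfold algQuery
  rw [algHistory_congr ψ ω ω' s fun r hr => h r (hr.trans_le hs)]

variable (f : (ι → Bool) → Bool)

/-- `f` is determined by the first `t` revealed values. -/
def detAt (ω : ι → Bool) (t : ℕ) : Prop :=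
  ∀ x : ι → Bool, (∀ s < t, x (algQuery ψ ω s) = ω (algQuery ψ ω s)) → f x = f ω

lemma stoppingTime_def (ω : ι → Bool) :
    algStoppingTime f ψ ω = sInf {u | 1 ≤ u ∧ detAt ψ f ω u} := rfl

lemma detAt_congr (ω ω' : ι → Bool) {t : ℕ}
    (h : ∀ s < t, ω' (algQuery ψ ω s) = ω (algQuery ψ ω s)) {u : ℕ} (hu : u ≤ t) :
    detAt ψ f ω' u ↔ detAt ψ f ω u := by
  have hq : ∀ s, s < u → algQuery ψ ω' s = algQuery ψ ω s := fun s hs =>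
    algQuery_congr ψ ω ω' h (le_of_lt (hs.trans_le hu))
  have hm : ∀ s < u, ω' (algQuery ψ ω s) = ω (algQuery ψ ω s) := fun s hs =>
    h s (hs.trans_le hu)
  constructor
  · intro hd
    have hfe : f ω = f ω' := by
      refine hd ω ?_
      intro s hs
      rw [hq s hs, ← hm s hs]
    intro x hx
    have hfx : f x = f ω' := by
      refine hd x ?_
      intro s hs
      rw [hq s hs, hx s hs, ← hm s hs]
    rw [hfx, ← hfe]
  · intro hd
    have hfe : f ω' = f ω := hd ω' hm
    intro x hx
    have hfx : f x = f ω := by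
      refine hd x ?_
      intro s hs
      rw [← hq s hs, hx s hs, hq s hs, hm s hs]
    rw [hfx, ← hfe]

lemma lt_stoppingTime_iff {ω : ι → Bool} {t : ℕ}
    (hne : {u | 1 ≤ u ∧ detAt ψ f ω u}.Nonempty) :
    t < algStoppingTime f ψ ω ↔ ∀ u, 1 ≤ u → u ≤ t → ¬ detAt ψ f ω u := by
  rw [stoppingTime_def]
  constructor
  · intro hlt u h1 hut hdet
    have hu : u ∈ {u | 1 ≤ u ∧ detAt ψ f ω u} := ⟨h1, hdet⟩
    exact absurd ((Nat.sInf_le hu).trans hut) (not_le.mpr hlt)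
  · intro hall
    by_contra hle
    push_neg at hle
    have hmem := Nat.sInf_mem hne
    exact hall _ hmem.1 hle hmem.2

lemma lt_stoppingTime_congr {ω ω' : ι → Bool} {t : ℕ}
    (h : ∀ s < t, ω' (algQuery ψ ω s) = ω (algQuery ψ ω s))
    (hne : {u | 1 ≤ u ∧ detAt ψ f ω u}.Nonempty)
    (hne' : {u | 1 ≤ u ∧ detAt ψ f ω' u}.Nonempty) :
    (t < algStoppingTime f ψ ω' ↔ t < algStoppingTime f ψ ω) := by
  rw [lt_stoppingTime_iff ψ f hne, lt_stoppingTime_iff ψ f hne']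
  constructor
  · intro hall u h1 hut hdet
    exact hall u h1 hut ((detAt_congr ψ f ω ω' h hut).mpr hdet)
  · intro hall u h1 hut hdet
    exact hall u h1 hut ((detAt_congr ψ f ω ω' h hut).mp hdet)

end History

end OSSSProof
namespace OSSSProof
set_option linter.unusedSectionVars false

open Finset Function

variable {ι : Type*} [Fintype ι] [DecidableEq ι]

variable (ψ : List (ι × Bool) → ι)

/-- the set of coordinates queried during the first `t` steps -/
def Jt (ω : ι → Bool) (t : ℕ) : Finset ι := (Finset.range t).image (algQuery ψ ω)

lemma mem_Jt {ω : ι → Bool} {t : ℕ} {j : ι} :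
    j ∈ Jt ψ ω t ↔ ∃ s < t, algQuery ψ ω s = j := by
  simp [Jt]

lemma Jt_zero (ω : ι → Bool) : Jt ψ ω 0 = ∅ := by simp [Jt]

lemma Jt_congr (ω ω' : ι → Bool) {t : ℕ}
    (h : ∀ s < t, ω' (algQuery ψ ω s) = ω (algQuery ψ ω s)) :
    Jt ψ ω' t = Jt ψ ω t := by
  unfold Jt
  refine Finset.image_congr ?_
  intro s hs
  simp only [Finset.coe_range, Set.mem_Iio] at hs
  exact algQuery_congr ψ ω ω' h (le_of_lt hs)

lemma query_not_mem_Jt (hψ : IsDecisionTree ψ) {ω : ι → Bool} {t : ℕ}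
    (ht : t < Fintype.card ι) : algQuery ψ ω t ∉ Jt ψ ω t := by
  rw [mem_Jt]
  rintro ⟨s, hs, he⟩
  exact hψ ω s t hs ht he

lemma Jt_card (hψ : IsDecisionTree ψ) (ω : ι → Bool) :
    Jt ψ ω (Fintype.card ι) = Finset.univ := by
  apply Finset.eq_univ_of_card
  rw [Jt, Finset.card_image_of_injOn, Finset.card_range]
  intro s hs u hu hsu
  simp only [Finset.coe_range, Set.mem_Iio] at hs hu
  by_contra hne
  rcases Nat.lt_or_ge s u with h | h
  · exact hψ ω s u h hu hsu
  · exact hψ ω u s (lt_of_le_of_ne h (Ne.symm hne)) hs hsu.symm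

lemma Jt_succ (ω : ι → Bool) (t : ℕ) :
    Jt ψ ω (t + 1) = insert (algQuery ψ ω t) (Jt ψ ω t) := by
  unfold Jt
  rw [Finset.range_add_one, Finset.image_insert]

/-- the configuration obtained from `ω` by resampling the first `t` queried
coordinates to the values of `ω'` -/
def Rt (t : ℕ) (ω ω' : ι → Bool) : ι → Bool :=
  fun j => if j ∈ Jt ψ ω t then ω' j else ω j

lemma Rt_zero (ω ω' : ι → Bool) : Rt ψ 0 ω ω' = ω := by
  funext j; simp [Rt, Jt_zero]

lemma Rt_card (hψ : IsDecisionTree ψ) (ω ω' : ι → Bool) :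
    Rt ψ (Fintype.card ι) ω ω' = ω' := by
  funext j; simp [Rt, Jt_card ψ hψ]

lemma Rt_succ (hψ : IsDecisionTree ψ) {t : ℕ} (ht : t < Fintype.card ι) (ω ω' : ι → Bool) :
    Rt ψ (t + 1) ω ω' =
      Function.update (Rt ψ t ω ω') (algQuery ψ ω t) (ω' (algQuery ψ ω t)) := by
  funext j
  rcases eq_or_ne j (algQuery ψ ω t) with rfl | hne
  · rw [Function.update_self]
    simp [Rt, Jt_succ]
  · rw [Function.update_of_ne hne]
    simp only [Rt, Jt_succ, Finset.mem_insert]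
    have : (j = algQuery ψ ω t ∨ j ∈ Jt ψ ω t) ↔ j ∈ Jt ψ ω t := by
      simp [hne]
    rw [if_congr this rfl rfl]

lemma Rt_at_query (hψ : IsDecisionTree ψ) {t : ℕ} (ht : t < Fintype.card ι) (ω ω' : ι → Bool) :
    Rt ψ t ω ω' (algQuery ψ ω t) = ω (algQuery ψ ω t) := by
  simp [Rt, query_not_mem_Jt ψ hψ ht]

lemma Rt_update_snd {t : ℕ} {ω : ι → Bool} {i : ι} (hi : i ∉ Jt ψ ω t)
    (ω' : ι → Bool) (c : Bool) :
    Rt ψ t ω (Function.update ω' i c) = Rt ψ t ω ω' := by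
  funext j
  unfold Rt
  by_cases hj : j ∈ Jt ψ ω t
  · rw [if_pos hj, if_pos hj, Function.update_of_ne (fun h : j = i => hi (h ▸ hj))]
  · rw [if_neg hj, if_neg hj]

lemma update_matches {t : ℕ} {ω : ι → Bool} {i : ι} (hi : i ∉ Jt ψ ω t) (c : Bool) :
    ∀ s < t, (Function.update ω i c) (algQuery ψ ω s) = ω (algQuery ψ ω s) := by
  intro s hs
  refine Function.update_of_ne ?_ _ _
  intro h
  exact hi (mem_Jt ψ |>.mpr ⟨s, hs, h⟩)

lemma Jt_update {t : ℕ} {ω : ι → Bool} {i : ι} (hi : i ∉ Jt ψ ω t) (c : Bool) :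
    Jt ψ (Function.update ω i c) t = Jt ψ ω t :=
  Jt_congr ψ ω _ (update_matches ψ hi c)

lemma query_update {t : ℕ} {ω : ι → Bool} {i : ι} (hi : i ∉ Jt ψ ω t) (c : Bool)
    {s : ℕ} (hs : s ≤ t) :
    algQuery ψ (Function.update ω i c) s = algQuery ψ ω s :=
  algQuery_congr ψ ω _ (update_matches ψ hi c) hs

lemma Rt_update_fst {t : ℕ} {ω : ι → Bool} {i : ι} (hi : i ∉ Jt ψ ω t)
    (ω' : ι → Bool) (c : Bool) :
    Rt ψ t (Function.update ω i c) ω' = Function.update (Rt ψ t ω ω') i c := by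
  funext j
  unfold Rt
  rw [Jt_update ψ hi c]
  rcases eq_or_ne j i with rfl | hne
  · rw [if_neg hi, Function.update_self, Function.update_self]
  · rw [Function.update_of_ne hne, Function.update_of_ne hne]

end OSSSProof
namespace OSSSProof
set_option linter.unusedSectionVars false

open Finset Function

variable {ι : Type*} [Fintype ι] [DecidableEq ι]

variable (ψ : List (ι × Bool) → ι) (f : (ι → Bool) → Bool)

lemma detAt_card (hψ : IsDecisionTree ψ) (ω : ι → Bool) :
    detAt ψ f ω (Fintype.card ι) := by
  intro x hx
  have hxe : x = ω := by
    funext j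
    have hj : j ∈ Jt ψ ω (Fintype.card ι) := by rw [Jt_card ψ hψ]; exact Finset.mem_univ j
    rcases (mem_Jt ψ).mp hj with ⟨s, hs, he⟩
    rw [← he]
    exact hx s hs
  rw [hxe]

lemma st_nonempty (hψ : IsDecisionTree ψ) (hcard : 0 < Fintype.card ι) (ω : ι → Bool) :
    {u | 1 ≤ u ∧ detAt ψ f ω u}.Nonempty :=
  ⟨Fintype.card ι, hcard, detAt_card ψ f hψ ω⟩

lemma st_le_card (hψ : IsDecisionTree ψ) (hcard : 0 < Fintype.card ι) (ω : ι → Bool) :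
    algStoppingTime f ψ ω ≤ Fintype.card ι := by
  rw [stoppingTime_def]
  exact Nat.sInf_le ⟨hcard, detAt_card ψ f hψ ω⟩

/-- once the algorithm has determined `f`, the discrete derivative at the currently
queried coordinate vanishes -/
lemma gI_zero_of_stopped (hψ : IsDecisionTree ψ) {t : ℕ} (ht : t < Fintype.card ι)
    {ω : ι → Bool} (hτ : ¬ t < algStoppingTime f ψ ω) :
    gI f (algQuery ψ ω t) ω = 0 := by
  have hcard : 0 < Fintype.card ι := Nat.pos_of_ne_zero (by omega)
  have hτle : algStoppingTime f ψ ω ≤ t := Nat.le_of_not_lt hτ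
  have hmem := Nat.sInf_mem (st_nonempty ψ f hψ hcard ω)
  rw [← stoppingTime_def] at hmem
  obtain ⟨h1, hdet⟩ := hmem
  have hfc : ∀ c : Bool, f (Function.update ω (algQuery ψ ω t) c) = f ω := by
    intro c
    apply hdet
    intro s hs
    refine Function.update_of_ne ?_ _ _
    exact hψ ω s t (lt_of_lt_of_le hs hτle) ht
  unfold gI boolInd
  rw [hfc true, hfc false]
  ring

end OSSSProof
namespace OSSSProof
set_option linter.unusedSectionVars false

open Finset Function

variable {ι : Type*} [Fintype ι] [DecidableEq ι]

lemma sum_split (i : ι) (A : Finset (ι → Bool)) (hA : ∀ x ∈ A, ∀ c, Function.update x i c ∈ A)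
    (h : (ι → Bool) → ℝ) :
    ∑ x ∈ A, h x
      = ∑ x ∈ A.filter (fun x => x i = false), (h x + h (Function.update x i true)) := by
  rw [Finset.sum_add_distrib]
  rw [← Finset.sum_filter_add_sum_filter_not A (fun x => x i = false) h]
  congr 1
  refine Finset.sum_bij' (fun a _ => Function.update a i false)
    (fun b _ => Function.update b i true) ?_ ?_ ?_ ?_ ?_
  · intro a ha
    rw [Finset.mem_filter] at ha ⊢
    exact ⟨hA a ha.1 false, Function.update_self i false a⟩
  · intro b hb
    rw [Finset.mem_filter] at hb ⊢
    refine ⟨hA b hb.1 true, ?_⟩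
    simp
  · intro a ha
    rw [Finset.mem_filter] at ha
    have ha2 : a i = true := by
      rcases Bool.eq_false_or_eq_true (a i) with h' | h'
      · exact h'
      · exact absurd h' ha.2
    show Function.update (Function.update a i false) i true = a
    rw [Function.update_idem, ← ha2, Function.update_eq_self]
  · intro b hb
    rw [Finset.mem_filter] at hb
    show Function.update (Function.update b i true) i false = b
    rw [Function.update_idem, ← hb.2, Function.update_eq_self]
  · intro a ha
    rw [Finset.mem_filter] at ha
    have ha2 : a i = true := by
      rcases Bool.eq_false_or_eq_true (a i) with h' | h'
      · exact h'
      · exact absurd h' ha.2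
    rw [Function.update_idem, ← ha2, Function.update_eq_self]

/-- the weight of all coordinates except `i` -/
noncomputable def wRest (p : ℝ) (i : ι) (x : ι → Bool) : ℝ :=
  ∏ j ∈ Finset.univ.erase i, w p (x j)

lemma wRest_update (p : ℝ) (i : ι) (x : ι → Bool) (c : Bool) :
    wRest p i (Function.update x i c) = wRest p i x := by
  unfold wRest
  refine Finset.prod_congr rfl ?_
  intro j hj
  rw [Function.update_of_ne (Finset.ne_of_mem_erase hj)]

lemma bw_factor (p : ℝ) (i : ι) (x : ι → Bool) :
    bernoulliWeight p x = w p (x i) * wRest p i x :=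
  (Finset.mul_prod_erase Finset.univ _ (Finset.mem_univ i)).symm

lemma bw_update (p : ℝ) (i : ι) (x : ι → Bool) (c : Bool) :
    bernoulliWeight p (Function.update x i c) = w p c * wRest p i x := by
  rw [bw_factor p i, Function.update_self, wRest_update]

/-- integrating out the second copy's value at coordinate `i` -/
lemma sum_snd_coord (p : ℝ) (i : ι) (γ : (ι → Bool) → ℝ)
    (hγ : ∀ x c, γ (Function.update x i c) = γ x) (K : ℝ) :
    ∑ x : ι → Bool, bernoulliWeight p x * ((K - boolR (x i)) * γ x)
      = (K - p) * ∑ x : ι → Bool, bernoulliWeight p x * γ x := by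
  have hA : ∀ x ∈ (Finset.univ : Finset (ι → Bool)), ∀ c, Function.update x i c ∈ Finset.univ :=
    fun x _ c => Finset.mem_univ _
  rw [sum_split i Finset.univ hA, sum_split i Finset.univ hA (fun x => bernoulliWeight p x * γ x),
    Finset.mul_sum]
  refine Finset.sum_congr rfl ?_
  intro x hx
  rw [Finset.mem_filter] at hx
  have hxf : x i = false := hx.2
  rw [bw_factor p i x, hxf, bw_update, hγ x true]
  have hT : boolR ((Function.update x i true) i) = 1 := by
    rw [Function.update_self]; rfl
  rw [hT]
  show w p false * wRest p i x * ((K - boolR false) * γ x)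
      + w p true * wRest p i x * ((K - 1) * γ x)
    = (K - p) * (w p false * wRest p i x * γ x + w p true * wRest p i x * γ x)
  have : boolR false = 0 := rfl
  rw [this]
  simp [w]
  try ring

/-- integrating out the first copy's value at coordinate `i` -/
lemma sum_fst_coord (p : ℝ) (i : ι) (A : Finset (ι → Bool))
    (hA : ∀ x ∈ A, ∀ c, Function.update x i c ∈ A)
    (φ γ : (ι → Bool) → ℝ) (hγ : ∀ x ∈ A, ∀ c, γ (Function.update x i c) = γ x) :
    ∑ x ∈ A, bernoulliWeight p x * (φ x * ((boolR (x i) - p) * γ x))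
      = p * (1 - p) * ∑ x ∈ A, bernoulliWeight p x
          * ((φ (Function.update x i true) - φ (Function.update x i false)) * γ x) := by
  rw [sum_split i A hA, sum_split i A hA
    (fun x => bernoulliWeight p x
      * ((φ (Function.update x i true) - φ (Function.update x i false)) * γ x)),
    Finset.mul_sum]
  refine Finset.sum_congr rfl ?_
  intro x hx
  rw [Finset.mem_filter] at hx
  have hxf : x i = false := hx.2
  have hxdef : Function.update x i false = x := by rw [← hxf]; exact Function.update_eq_self i x
  rw [bw_factor p i x, hxf, bw_update, hγ x hx.1 true]
  have hT : boolR ((Function.update x i true) i) = 1 := by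
    rw [Function.update_self]; rfl
  rw [hT]
  rw [Function.update_idem, Function.update_idem, hxdef]
  show w p false * wRest p i x * (φ x * ((boolR false - p) * γ x))
      + w p true * wRest p i x * (φ (Function.update x i true) * ((1 - p) * γ x))
    = p * (1 - p) * (w p false * wRest p i x * ((φ (Function.update x i true) - φ x) * γ x)
      + w p true * wRest p i x * ((φ (Function.update x i true) - φ x) * γ x))
  have : boolR false = 0 := rfl
  rw [this]
  simp [w]
  try ring

end OSSSProof
namespace OSSSProof
set_option linter.unusedSectionVars false

open Finset Function

variable {ι : Type*} [Fintype ι] [DecidableEq ι]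

variable (ψ : List (ι × Bool) → ι) (f : (ι → Bool) → Bool)

/-- the complementary mix: the first `t` queried coordinates keep the values of `ω`,
the rest take the values of `ω'` -/
def mixA (t : ℕ) (ω ω' : ι → Bool) : ι → Bool :=
  fun j => if j ∈ Jt ψ ω t then ω j else ω' j

lemma mixA_matches (t : ℕ) (ω ω' : ι → Bool) :
    ∀ s < t, mixA ψ t ω ω' (algQuery ψ ω s) = ω (algQuery ψ ω s) := by
  intro s hs
  unfold mixA
  rw [if_pos ((mem_Jt ψ).mpr ⟨s, hs, rfl⟩)]

lemma mixA_Jt (t : ℕ) (ω ω' : ι → Bool) :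
    Jt ψ (mixA ψ t ω ω') t = Jt ψ ω t :=
  Jt_congr ψ ω _ (mixA_matches ψ t ω ω')

lemma mixA_query (t : ℕ) (ω ω' : ι → Bool) {s : ℕ} (hs : s ≤ t) :
    algQuery ψ (mixA ψ t ω ω') s = algQuery ψ ω s :=
  algQuery_congr ψ ω _ (mixA_matches ψ t ω ω') hs

lemma mixA_invol (t : ℕ) (ω ω' : ι → Bool) :
    mixA ψ t (mixA ψ t ω ω') (Rt ψ t ω ω') = ω
      ∧ Rt ψ t (mixA ψ t ω ω') (Rt ψ t ω ω') = ω' := by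
  constructor <;> funext j <;>
    · show (if j ∈ Jt ψ (mixA ψ t ω ω') t then _ else _) = _
      rw [mixA_Jt]
      by_cases hj : j ∈ Jt ψ ω t <;> simp only [mixA, Rt, if_pos, if_neg, hj, if_true, if_false]

lemma mixA_weight (p : ℝ) (t : ℕ) (ω ω' : ι → Bool) :
    bernoulliWeight p (mixA ψ t ω ω') * bernoulliWeight p (Rt ψ t ω ω')
      = bernoulliWeight p ω * bernoulliWeight p ω' := by
  simp only [bw_eq]
  rw [← Finset.prod_mul_distrib, ← Finset.prod_mul_distrib]
  refine Finset.prod_congr rfl ?_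
  intro j _
  unfold mixA Rt
  by_cases hj : j ∈ Jt ψ ω t
  · rw [if_pos hj, if_pos hj]
  · rw [if_neg hj, if_neg hj, mul_comm]

lemma mixA_mem (hψ : IsDecisionTree ψ) {t : ℕ} (ht : t < Fintype.card ι) {i : ι}
    (ω ω' : ι → Bool)
    (hω : ω ∈ Finset.univ.filter
      (fun ω => t < algStoppingTime f ψ ω ∧ algQuery ψ ω t = i)) :
    mixA ψ t ω ω' ∈ Finset.univ.filter
      (fun ω => t < algStoppingTime f ψ ω ∧ algQuery ψ ω t = i) := by
  have hcard : 0 < Fintype.card ι := lt_of_le_of_lt (Nat.zero_le t) ht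
  rw [Finset.mem_filter] at hω ⊢
  obtain ⟨-, hτ, hq⟩ := hω
  refine ⟨Finset.mem_univ _, ?_, ?_⟩
  · exact (lt_stoppingTime_congr ψ f (mixA_matches ψ t ω ω')
      (st_nonempty ψ f hψ hcard ω) (st_nonempty ψ f hψ hcard _)).mpr hτ
  · rw [mixA_query ψ t ω ω' (le_refl t), hq]

/-- the decoupling identity: over the event that coordinate `i` is queried at time `t`
before the stopping time, the resampled configuration is an independent sample -/
lemma decouple (hψ : IsDecisionTree ψ) (p : ℝ) {t : ℕ} (ht : t < Fintype.card ι) (i : ι) :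
    ∑ ω ∈ Finset.univ.filter
        (fun ω => t < algStoppingTime f ψ ω ∧ algQuery ψ ω t = i),
      ∑ ω' : ι → Bool, bernoulliWeight p ω * bernoulliWeight p ω'
        * gI f i (Rt ψ t ω ω')
    = (∑ ω ∈ Finset.univ.filter
        (fun ω => t < algStoppingTime f ψ ω ∧ algQuery ψ ω t = i),
        bernoulliWeight p ω) * (∑ x : ι → Bool, bernoulliWeight p x * gI f i x) := by
  set A := Finset.univ.filter
    (fun ω => t < algStoppingTime f ψ ω ∧ algQuery ψ ω t = i) with hA
  have e1 := Finset.sum_product' (s := A) (t := (Finset.univ : Finset (ι → Bool)))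
    (f := fun ω ω' => bernoulliWeight p ω * bernoulliWeight p ω' * gI f i (Rt ψ t ω ω'))
  have e2 := Finset.sum_product' (s := A) (t := (Finset.univ : Finset (ι → Bool)))
    (f := fun ω ω' => bernoulliWeight p ω * bernoulliWeight p ω' * gI f i ω')
  have key : ∑ a ∈ A ×ˢ Finset.univ, bernoulliWeight p a.1 * bernoulliWeight p a.2
        * gI f i (Rt ψ t a.1 a.2)
      = ∑ a ∈ A ×ˢ Finset.univ, bernoulliWeight p a.1 * bernoulliWeight p a.2
        * gI f i a.2 := by
    refine Finset.sum_bij' (fun a _ => (mixA ψ t a.1 a.2, Rt ψ t a.1 a.2))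
      (fun a _ => (mixA ψ t a.1 a.2, Rt ψ t a.1 a.2)) ?_ ?_ ?_ ?_ ?_
    · intro a ha
      rw [Finset.mem_product] at ha ⊢
      exact ⟨mixA_mem ψ f hψ ht a.1 a.2 ha.1, Finset.mem_univ _⟩
    · intro a ha
      rw [Finset.mem_product] at ha ⊢
      exact ⟨mixA_mem ψ f hψ ht a.1 a.2 ha.1, Finset.mem_univ _⟩
    · intro a _
      have h := mixA_invol ψ t a.1 a.2
      show (mixA ψ t (mixA ψ t a.1 a.2) (Rt ψ t a.1 a.2),
        Rt ψ t (mixA ψ t a.1 a.2) (Rt ψ t a.1 a.2)) = a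
      rw [h.1, h.2]
    · intro a _
      have h := mixA_invol ψ t a.1 a.2
      show (mixA ψ t (mixA ψ t a.1 a.2) (Rt ψ t a.1 a.2),
        Rt ψ t (mixA ψ t a.1 a.2) (Rt ψ t a.1 a.2)) = a
      rw [h.1, h.2]
    · intro a _
      show bernoulliWeight p a.1 * bernoulliWeight p a.2 * gI f i (Rt ψ t a.1 a.2)
        = bernoulliWeight p (mixA ψ t a.1 a.2) * bernoulliWeight p (Rt ψ t a.1 a.2)
          * gI f i (Rt ψ t a.1 a.2)
      rw [mixA_weight]
  calc ∑ ω ∈ A, ∑ ω' : ι → Bool,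
        bernoulliWeight p ω * bernoulliWeight p ω' * gI f i (Rt ψ t ω ω')
      = ∑ a ∈ A ×ˢ Finset.univ, bernoulliWeight p a.1 * bernoulliWeight p a.2
          * gI f i (Rt ψ t a.1 a.2) := e1.symm
    _ = ∑ a ∈ A ×ˢ Finset.univ, bernoulliWeight p a.1 * bernoulliWeight p a.2
          * gI f i a.2 := key
    _ = ∑ ω ∈ A, ∑ x : ι → Bool, bernoulliWeight p ω * bernoulliWeight p x
          * gI f i x := e2
    _ = (∑ ω ∈ A, bernoulliWeight p ω)
          * (∑ x : ι → Bool, bernoulliWeight p x * gI f i x) := by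
        rw [Finset.sum_mul_sum]
        refine Finset.sum_congr rfl fun ω _ => Finset.sum_congr rfl fun x _ => by ring

end OSSSProof
namespace OSSSProof
set_option linter.unusedSectionVars false

open Finset Function

variable {ι : Type*} [Fintype ι] [DecidableEq ι]

variable (ψ : List (ι × Bool) → ι) (f : (ι → Bool) → Bool) (p : ℝ)

/-- the interpolation `E[f(ω) f(ω^t)]` where `ω^t` resamples the first `t` queried
coordinates -/
noncomputable def SS (t : ℕ) : ℝ :=
  ∑ ω : ι → Bool, ∑ ω' : ι → Bool,
    bernoulliWeight p ω * bernoulliWeight p ω' * (boolInd f ω * boolInd f (Rt ψ t ω ω'))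

lemma SS_zero : SS ψ f p 0 = bernoulliMean p f := by
  unfold SS
  have h : ∀ ω : ι → Bool, ∑ ω' : ι → Bool,
      bernoulliWeight p ω * bernoulliWeight p ω' * (boolInd f ω * boolInd f (Rt ψ 0 ω ω'))
      = bernoulliWeight p ω * boolInd f ω := by
    intro ω
    have : ∀ ω' : ι → Bool,
        bernoulliWeight p ω * bernoulliWeight p ω' * (boolInd f ω * boolInd f (Rt ψ 0 ω ω'))
        = bernoulliWeight p ω' * (bernoulliWeight p ω * boolInd f ω) := by
      intro ω'
      rw [Rt_zero, boolInd_mul_self]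
      ring
    rw [Finset.sum_congr rfl fun ω' _ => this ω', ← Finset.sum_mul, sum_bw, one_mul]
  rw [Finset.sum_congr rfl fun ω _ => h ω]
  rfl

lemma SS_card (hψ : IsDecisionTree ψ) :
    SS ψ f p (Fintype.card ι) = bernoulliMean p f * bernoulliMean p f := by
  unfold SS
  have hm : bernoulliMean p f = ∑ ω : ι → Bool, bernoulliWeight p ω * boolInd f ω := rfl
  rw [hm, Finset.sum_mul_sum]
  refine Finset.sum_congr rfl fun ω _ => Finset.sum_congr rfl fun ω' _ => ?_
  rw [Rt_card ψ hψ]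
  ring

lemma var_eq : bernoulliVar p f = bernoulliMean p f - bernoulliMean p f * bernoulliMean p f := by
  have hm : bernoulliMean p f = ∑ ω : ι → Bool, bernoulliWeight p ω * boolInd f ω := rfl
  unfold bernoulliVar bernoulliExp
  have h : ∀ ω : ι → Bool,
      bernoulliWeight p ω * (boolInd f ω - bernoulliMean p f)^2
      = (bernoulliWeight p ω * boolInd f ω
          - 2 * bernoulliMean p f * (bernoulliWeight p ω * boolInd f ω))
        + bernoulliMean p f * bernoulliMean p f * bernoulliWeight p ω := by
    intro ω
    have hsq := boolInd_mul_self f ω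
    linear_combination bernoulliWeight p ω * hsq
  rw [Finset.sum_congr rfl fun ω _ => h ω, Finset.sum_add_distrib, Finset.sum_sub_distrib,
    ← Finset.mul_sum, ← Finset.mul_sum, sum_bw, ← hm]
  ring

/-- pointwise difference of consecutive interpolations -/
lemma F_diff (hψ : IsDecisionTree ψ) {t : ℕ} (ht : t < Fintype.card ι) (ω ω' : ι → Bool) :
    boolInd f (Rt ψ t ω ω') - boolInd f (Rt ψ (t + 1) ω ω')
      = (boolR (ω (algQuery ψ ω t)) - boolR (ω' (algQuery ψ ω t)))
        * gI f (algQuery ψ ω t) (Rt ψ t ω ω') := by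
  have hz : Rt ψ t ω ω' (algQuery ψ ω t) = ω (algQuery ψ ω t) := Rt_at_query ψ hψ ht ω ω'
  have hsucc : Rt ψ (t + 1) ω ω' =
      Function.update (Rt ψ t ω ω') (algQuery ψ ω t) (ω' (algQuery ψ ω t)) :=
    Rt_succ ψ hψ ht ω ω'
  set i := algQuery ψ ω t with hi
  set z := Rt ψ t ω ω' with hzdef
  rw [hsucc]
  unfold gI
  cases ha : ω i <;> cases hb : ω' i
  · have h1 : Function.update z i false = z := by
      rw [← ha, ← hz, Function.update_eq_self]
    rw [h1]
    show boolInd f z - boolInd f z = (boolR false - boolR false) * (boolInd f (Function.update z i true) - boolInd f z)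
    simp [boolR]
  · have h1 : Function.update z i false = z := by
      rw [← ha, ← hz, Function.update_eq_self]
    rw [h1]
    show boolInd f z - boolInd f (Function.update z i true)
      = (boolR false - boolR true) * (boolInd f (Function.update z i true) - boolInd f z)
    show boolInd f z - boolInd f (Function.update z i true)
      = ((0:ℝ) - 1) * (boolInd f (Function.update z i true) - boolInd f z)
    ring
  · have h1 : Function.update z i true = z := by
      rw [← ha, ← hz, Function.update_eq_self]
    rw [h1]
    show boolInd f z - boolInd f (Function.update z i false)
      = (boolR true - boolR false) * (boolInd f z - boolInd f (Function.update z i false))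
    show boolInd f z - boolInd f (Function.update z i false)
      = ((1:ℝ) - 0) * (boolInd f z - boolInd f (Function.update z i false))
    ring
  · have h1 : Function.update z i true = z := by
      rw [← ha, ← hz, Function.update_eq_self]
    rw [h1]
    show boolInd f z - boolInd f z
      = (boolR true - boolR true) * (boolInd f z - boolInd f (Function.update z i false))
    simp [boolR]

end OSSSProof
namespace OSSSProof
set_option linter.unusedSectionVars false

open Finset Function

variable {ι : Type*} [Fintype ι] [DecidableEq ι]

variable (ψ : List (ι × Bool) → ι) (f : (ι → Bool) → Bool) (p : ℝ)

/-- conditional expected discrete derivative of the resampled configuration -/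
noncomputable def Gfun (t : ℕ) (ω : ι → Bool) : ℝ :=
  ∑ x : ι → Bool, bernoulliWeight p x * gI f (algQuery ψ ω t) (Rt ψ t ω x)

lemma Gfun_eq {t : ℕ} {ω : ι → Bool} {i : ι} (hq : algQuery ψ ω t = i) :
    Gfun ψ f p t ω = ∑ x : ι → Bool, bernoulliWeight p x * gI f i (Rt ψ t ω x) := by
  unfold Gfun; rw [hq]

lemma Gfun_nonneg (hp : p ∈ Set.Icc (0:ℝ) 1) (hf : IncreasingBoolFun f)
    {t : ℕ} {ω : ι → Bool} {i : ι} :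
    0 ≤ ∑ x : ι → Bool, bernoulliWeight p x * gI f i (Rt ψ t ω x) :=
  Finset.sum_nonneg fun x _ => mul_nonneg (bw_nonneg hp x) (gI_nonneg hf i _)

lemma step_t (hp : p ∈ Set.Icc (0:ℝ) 1) (hf : IncreasingBoolFun f)
    (hψ : IsDecisionTree ψ) {t : ℕ} (ht : t < Fintype.card ι) :
    SS ψ f p t - SS ψ f p (t + 1)
      ≤ p * (1 - p) * ∑ i : ι,
          (∑ ω ∈ Finset.univ.filter
              (fun ω => t < algStoppingTime f ψ ω ∧ algQuery ψ ω t = i),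
            bernoulliWeight p ω)
          * (∑ x : ι → Bool, bernoulliWeight p x * gI f i x) := by
  -- Step A: exact identity for the one-step difference
  have hstepA : SS ψ f p t - SS ψ f p (t + 1)
      = ∑ ω : ι → Bool, bernoulliWeight p ω * (boolInd f ω
          * ((boolR (ω (algQuery ψ ω t)) - p) * Gfun ψ f p t ω)) := by
    unfold SS
    rw [← Finset.sum_sub_distrib]
    refine Finset.sum_congr rfl ?_
    intro ω _
    rw [← Finset.sum_sub_distrib]
    have hnotmem : algQuery ψ ω t ∉ Jt ψ ω t := query_not_mem_Jt ψ hψ ht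
    have hγ : ∀ (x : ι → Bool) (c : Bool),
        gI f (algQuery ψ ω t) (Rt ψ t ω (Function.update x (algQuery ψ ω t) c))
          = gI f (algQuery ψ ω t) (Rt ψ t ω x) := by
      intro x c
      rw [Rt_update_snd ψ hnotmem]
    calc ∑ ω' : ι → Bool,
          (bernoulliWeight p ω * bernoulliWeight p ω'
              * (boolInd f ω * boolInd f (Rt ψ t ω ω'))
            - bernoulliWeight p ω * bernoulliWeight p ω'
              * (boolInd f ω * boolInd f (Rt ψ (t + 1) ω ω')))
        = bernoulliWeight p ω * boolInd f ω * ∑ ω' : ι → Bool, bernoulliWeight p ω'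
            * ((boolR (ω (algQuery ψ ω t)) - boolR (ω' (algQuery ψ ω t)))
              * gI f (algQuery ψ ω t) (Rt ψ t ω ω')) := by
          rw [Finset.mul_sum]
          refine Finset.sum_congr rfl ?_
          intro ω' _
          linear_combination (bernoulliWeight p ω * bernoulliWeight p ω' * boolInd f ω)
            * F_diff ψ f hψ ht ω ω'
      _ = bernoulliWeight p ω * boolInd f ω * ((boolR (ω (algQuery ψ ω t)) - p)
            * ∑ x : ι → Bool, bernoulliWeight p x
              * gI f (algQuery ψ ω t) (Rt ψ t ω x)) := by
          rw [sum_snd_coord p (algQuery ψ ω t)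
            (fun x => gI f (algQuery ψ ω t) (Rt ψ t ω x)) hγ (boolR (ω (algQuery ψ ω t)))]
      _ = bernoulliWeight p ω * (boolInd f ω
            * ((boolR (ω (algQuery ψ ω t)) - p) * Gfun ψ f p t ω)) := by
          rw [Gfun_eq ψ f p rfl]
          ring
  -- Step B: fiber decomposition over the queried coordinate
  have hstepB : ∑ ω : ι → Bool, bernoulliWeight p ω * (boolInd f ω
        * ((boolR (ω (algQuery ψ ω t)) - p) * Gfun ψ f p t ω))
      = ∑ i : ι, ∑ ω ∈ Finset.univ.filter (fun ω => algQuery ψ ω t = i),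
          bernoulliWeight p ω * (boolInd f ω
            * ((boolR (ω i) - p)
              * ∑ x : ι → Bool, bernoulliWeight p x * gI f i (Rt ψ t ω x))) := by
    rw [← Finset.sum_fiberwise Finset.univ (fun ω => algQuery ψ ω t)
      (fun ω => bernoulliWeight p ω * (boolInd f ω
        * ((boolR (ω (algQuery ψ ω t)) - p) * Gfun ψ f p t ω)))]
    refine Finset.sum_congr rfl ?_
    intro i _
    refine Finset.sum_congr rfl ?_
    intro ω hω
    have hq : algQuery ψ ω t = i := (Finset.mem_filter.mp hω).2
    rw [Gfun_eq ψ f p hq, hq]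
  -- Step C: integrate out the value of coordinate `i` in the first copy
  have hstepC : ∀ i : ι,
      ∑ ω ∈ Finset.univ.filter (fun ω => algQuery ψ ω t = i),
          bernoulliWeight p ω * (boolInd f ω
            * ((boolR (ω i) - p)
              * ∑ x : ι → Bool, bernoulliWeight p x * gI f i (Rt ψ t ω x)))
        = p * (1 - p) * ∑ ω ∈ Finset.univ.filter (fun ω => algQuery ψ ω t = i),
            bernoulliWeight p ω * (gI f i ω
              * ∑ x : ι → Bool, bernoulliWeight p x * gI f i (Rt ψ t ω x)) := by
    intro i
    have hA : ∀ ω ∈ Finset.univ.filter (fun ω => algQuery ψ ω t = i), ∀ c : Bool,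
        Function.update ω i c ∈ Finset.univ.filter (fun ω => algQuery ψ ω t = i) := by
      intro ω hω c
      rw [Finset.mem_filter] at hω ⊢
      have hq : algQuery ψ ω t = i := hω.2
      have hi : i ∉ Jt ψ ω t := hq ▸ query_not_mem_Jt ψ hψ ht
      exact ⟨Finset.mem_univ _, by rw [query_update ψ hi c (le_refl t), hq]⟩
    have hγ : ∀ ω ∈ Finset.univ.filter (fun ω => algQuery ψ ω t = i), ∀ c : Bool,
        (∑ x : ι → Bool, bernoulliWeight p x
            * gI f i (Rt ψ t (Function.update ω i c) x))
          = ∑ x : ι → Bool, bernoulliWeight p x * gI f i (Rt ψ t ω x) := by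
      intro ω hω c
      rw [Finset.mem_filter] at hω
      have hi : i ∉ Jt ψ ω t := hω.2 ▸ query_not_mem_Jt ψ hψ ht
      refine Finset.sum_congr rfl ?_
      intro x _
      rw [Rt_update_fst ψ hi x c, gI_update]
    exact sum_fst_coord p i _ hA (boolInd f)
      (fun ω => ∑ x : ι → Bool, bernoulliWeight p x * gI f i (Rt ψ t ω x)) hγ
  -- Step D: drop the discrete derivative of the first copy, keeping the stopping event
  have hstepD : ∀ i : ι,
      ∑ ω ∈ Finset.univ.filter (fun ω => algQuery ψ ω t = i),
          bernoulliWeight p ω * (gI f i ω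
            * ∑ x : ι → Bool, bernoulliWeight p x * gI f i (Rt ψ t ω x))
        ≤ ∑ ω ∈ Finset.univ.filter
            (fun ω => t < algStoppingTime f ψ ω ∧ algQuery ψ ω t = i),
            bernoulliWeight p ω
              * ∑ x : ι → Bool, bernoulliWeight p x * gI f i (Rt ψ t ω x) := by
    intro i
    rw [Finset.sum_filter, Finset.sum_filter]
    refine Finset.sum_le_sum ?_
    intro ω _
    by_cases hq : algQuery ψ ω t = i
    · by_cases hτ : t < algStoppingTime f ψ ω
      · have hand : t < algStoppingTime f ψ ω ∧ algQuery ψ ω t = i := ⟨hτ, hq⟩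
        rw [if_pos hq, if_pos hand]
        have hG := Gfun_nonneg ψ f p hp hf (t := t) (ω := ω) (i := i)
        have hW := bw_nonneg hp ω
        have h1 : gI f i ω * (∑ x : ι → Bool, bernoulliWeight p x * gI f i (Rt ψ t ω x))
            ≤ ∑ x : ι → Bool, bernoulliWeight p x * gI f i (Rt ψ t ω x) := by
          nth_rewrite 2 [← one_mul (∑ x : ι → Bool, bernoulliWeight p x * gI f i (Rt ψ t ω x))]
          exact mul_le_mul_of_nonneg_right (gI_le_one f i ω) hG
        exact mul_le_mul_of_nonneg_left h1 hW
      · have hand : ¬ (t < algStoppingTime f ψ ω ∧ algQuery ψ ω t = i) :=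
          fun hc => hτ hc.1
        rw [if_pos hq, if_neg hand]
        have hz : gI f i ω = 0 := hq ▸ gI_zero_of_stopped ψ f hψ ht hτ
        rw [hz, zero_mul, mul_zero]
    · have hand : ¬ (t < algStoppingTime f ψ ω ∧ algQuery ψ ω t = i) :=
        fun hc => hq hc.2
      rw [if_neg hq, if_neg hand]
  -- Step E: decouple and conclude
  rw [hstepA, hstepB]
  calc ∑ i : ι, ∑ ω ∈ Finset.univ.filter (fun ω => algQuery ψ ω t = i),
        bernoulliWeight p ω * (boolInd f ω
          * ((boolR (ω i) - p)
            * ∑ x : ι → Bool, bernoulliWeight p x * gI f i (Rt ψ t ω x)))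
      = ∑ i : ι, p * (1 - p)
          * ∑ ω ∈ Finset.univ.filter (fun ω => algQuery ψ ω t = i),
            bernoulliWeight p ω * (gI f i ω
              * ∑ x : ι → Bool, bernoulliWeight p x * gI f i (Rt ψ t ω x)) :=
        Finset.sum_congr rfl fun i _ => hstepC i
    _ ≤ ∑ i : ι, p * (1 - p)
          * ∑ ω ∈ Finset.univ.filter
              (fun ω => t < algStoppingTime f ψ ω ∧ algQuery ψ ω t = i),
            bernoulliWeight p ω
              * ∑ x : ι → Bool, bernoulliWeight p x * gI f i (Rt ψ t ω x) := by
        refine Finset.sum_le_sum ?_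
        intro i _
        refine mul_le_mul_of_nonneg_left (hstepD i) ?_
        rcases hp with ⟨h0, h1⟩
        nlinarith
    _ = p * (1 - p) * ∑ i : ι,
          (∑ ω ∈ Finset.univ.filter
              (fun ω => t < algStoppingTime f ψ ω ∧ algQuery ψ ω t = i),
            bernoulliWeight p ω)
          * (∑ x : ι → Bool, bernoulliWeight p x * gI f i x) := by
        rw [Finset.mul_sum]
        refine Finset.sum_congr rfl ?_
        intro i _
        have hd := decouple ψ f hψ p ht i
        rw [← hd]
        congr 1
        refine Finset.sum_congr rfl ?_
        intro ω _
        rw [Finset.mul_sum]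
        exact Finset.sum_congr rfl fun x _ => by ring

end OSSSProof
namespace OSSSProof
set_option linter.unusedSectionVars false

open Finset Function

variable {ι : Type*} [Fintype ι] [DecidableEq ι]

variable (ψ : List (ι × Bool) → ι) (f : (ι → Bool) → Bool) (p : ℝ)

lemma indicator_sum (hψ : IsDecisionTree ψ) (hcard : 0 < Fintype.card ι) (i : ι)
    (ω : ι → Bool) :
    ∑ t ∈ Finset.range (Fintype.card ι),
        (if t < algStoppingTime f ψ ω ∧ algQuery ψ ω t = i
          then bernoulliWeight p ω else 0)
      = if ∃ t, t < algStoppingTime f ψ ω ∧ algQuery ψ ω t = i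
          then bernoulliWeight p ω else 0 := by
  by_cases hex : ∃ t, t < algStoppingTime f ψ ω ∧ algQuery ψ ω t = i
  · obtain ⟨t₀, ht₀⟩ := hex
    have hτN : algStoppingTime f ψ ω ≤ Fintype.card ι := st_le_card ψ f hψ hcard ω
    have ht₀N : t₀ ∈ Finset.range (Fintype.card ι) :=
      Finset.mem_range.mpr (lt_of_lt_of_le ht₀.1 hτN)
    rw [if_pos ⟨t₀, ht₀⟩]
    have huniq : ∀ t ∈ Finset.range (Fintype.card ι),
        ((t < algStoppingTime f ψ ω ∧ algQuery ψ ω t = i) ↔ t = t₀) := by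
      intro t htm
      constructor
      · intro hc
        by_contra hne
        rcases Nat.lt_trichotomy t t₀ with h | h | h
        · exact hψ ω t t₀ h (lt_of_lt_of_le ht₀.1 hτN) (hc.2.trans ht₀.2.symm)
        · exact hne h
        · exact hψ ω t₀ t h (Finset.mem_range.mp htm) (ht₀.2.trans hc.2.symm)
      · rintro rfl; exact ht₀
    calc ∑ t ∈ Finset.range (Fintype.card ι),
          (if t < algStoppingTime f ψ ω ∧ algQuery ψ ω t = i
            then bernoulliWeight p ω else 0)
        = ∑ t ∈ Finset.range (Fintype.card ι),
            (if t = t₀ then bernoulliWeight p ω else 0) := by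
          refine Finset.sum_congr rfl ?_
          intro t htm
          by_cases h : t = t₀
          · rw [if_pos ((huniq t htm).mpr h), if_pos h]
          · rw [if_neg (fun hc => h ((huniq t htm).mp hc)), if_neg h]
      _ = bernoulliWeight p ω := by
          rw [Finset.sum_ite_eq' (Finset.range (Fintype.card ι)) t₀
            (fun _ => bernoulliWeight p ω), if_pos ht₀N]
  · rw [if_neg hex]
    refine Finset.sum_eq_zero ?_
    intro t _
    exact if_neg (fun hc => hex ⟨t, hc⟩)

lemma revealment_eq (hψ : IsDecisionTree ψ) (hcard : 0 < Fintype.card ι) (i : ι) :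
    revealment p f ψ i
      = ∑ t ∈ Finset.range (Fintype.card ι),
          ∑ ω ∈ Finset.univ.filter
            (fun ω => t < algStoppingTime f ψ ω ∧ algQuery ψ ω t = i),
            bernoulliWeight p ω := by
  have h1 : ∀ t, (∑ ω ∈ Finset.univ.filter
        (fun ω => t < algStoppingTime f ψ ω ∧ algQuery ψ ω t = i),
        bernoulliWeight p ω)
      = ∑ ω : ι → Bool, (if t < algStoppingTime f ψ ω ∧ algQuery ψ ω t = i
          then bernoulliWeight p ω else 0) := fun t => Finset.sum_filter _ _
  calc revealment p f ψ i
      = ∑ ω : ι → Bool, (if ∃ t, t < algStoppingTime f ψ ω ∧ algQuery ψ ω t = i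
          then bernoulliWeight p ω else 0) := by
        unfold revealment bernoulliExp
        refine Finset.sum_congr rfl ?_
        intro ω _
        by_cases hex : ∃ t, t < algStoppingTime f ψ ω ∧ algQuery ψ ω t = i
        · rw [if_pos hex]; simp [hex]
        · rw [if_neg hex]; simp [hex]
    _ = ∑ ω : ι → Bool, ∑ t ∈ Finset.range (Fintype.card ι),
          (if t < algStoppingTime f ψ ω ∧ algQuery ψ ω t = i
            then bernoulliWeight p ω else 0) :=
        Finset.sum_congr rfl fun ω _ => (indicator_sum ψ f p hψ hcard i ω).symm
    _ = ∑ t ∈ Finset.range (Fintype.card ι), ∑ ω : ι → Bool,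
          (if t < algStoppingTime f ψ ω ∧ algQuery ψ ω t = i
            then bernoulliWeight p ω else 0) := Finset.sum_comm
    _ = ∑ t ∈ Finset.range (Fintype.card ι),
          ∑ ω ∈ Finset.univ.filter
            (fun ω => t < algStoppingTime f ψ ω ∧ algQuery ψ ω t = i),
            bernoulliWeight p ω :=
        Finset.sum_congr rfl fun t _ => (h1 t).symm

end OSSSProof
/-- **The OSSS inequality.**  For any `p ∈ [0,1]`, any increasing boolean function
`f : {0,1}^n → {0,1}` and any decision tree `T` (given by its decision rule `ψ`),
`Var_p(f) ≤ p(1−p) Σ_i δ_i(T)·Inf_i[f]`. -/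
theorem osss_inequality (n : ℕ) (p : ℝ) (hp : p ∈ Set.Icc (0 : ℝ) 1)
    (f : (Fin n → Bool) → Bool) (hf : IncreasingBoolFun f)
    (ψ : List (Fin n × Bool) → Fin n) (hψ : IsDecisionTree ψ) :
    bernoulliVar p f ≤
      p * (1 - p) * ∑ i : Fin n, revealment p f ψ i * influence p f i := by
  classical
  have hvar : bernoulliVar p f
      = OSSSProof.SS ψ f p 0 - OSSSProof.SS ψ f p (Fintype.card (Fin n)) := by
    rw [OSSSProof.var_eq f p, OSSSProof.SS_zero ψ f p, OSSSProof.SS_card ψ f p hψ]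
  calc bernoulliVar p f
      = OSSSProof.SS ψ f p 0 - OSSSProof.SS ψ f p (Fintype.card (Fin n)) := hvar
    _ = ∑ t ∈ Finset.range (Fintype.card (Fin n)),
          (OSSSProof.SS ψ f p t - OSSSProof.SS ψ f p (t + 1)) :=
        (Finset.sum_range_sub' (fun t => OSSSProof.SS ψ f p t) (Fintype.card (Fin n))).symm
    _ ≤ ∑ t ∈ Finset.range (Fintype.card (Fin n)), p * (1 - p) * ∑ i : Fin n,
          (∑ ω ∈ Finset.univ.filter
              (fun ω => t < algStoppingTime f ψ ω ∧ algQuery ψ ω t = i),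
            bernoulliWeight p ω)
          * (∑ x : Fin n → Bool, bernoulliWeight p x * OSSSProof.gI f i x) :=
        Finset.sum_le_sum fun t htm =>
          OSSSProof.step_t ψ f p hp hf hψ (Finset.mem_range.mp htm)
    _ = p * (1 - p) * ∑ i : Fin n, revealment p f ψ i * influence p f i := by
        rw [← Finset.mul_sum]
        congr 1
        rw [Finset.sum_comm]
        refine Finset.sum_congr rfl ?_
        intro i _
        rw [← Finset.sum_mul]
        have hcard : 0 < Fintype.card (Fin n) := by
          rw [Fintype.card_fin]; exact i.pos
        rw [← OSSSProof.revealment_eq ψ f p hψ hcard i, OSSSProof.influence_eq hf p i]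
end

section
/- Analysis lemma for families of differential inequalities: Let x₀ > 0, M > 0, and let f_n : [0,x₀] → [0,M] (n ≥ 0) be differentiable functions, each nondecreasing in x, such that the sequence (f_n(x)) converges pointwise on [0,x₀], such that Σ_n(x) := Σ_{k=0}^{n−1} f_k(x) > 0 for all n ≥ 1 and x ∈ [0,x₀], and such that f_n'(x) ≥ (n/Σ_n(x)) f_n(x) for all n ≥ 1 and x ∈ [0,x₀]. Then there exists x₁ ∈ [0,x₀] such that: (P1) for every x ∈ [0,x₁), there exist c_x > 0 and N such that f_n(x) ≤ exp(−c_x n) for all n ≥ N; (P2) for every x ∈ (x₁,x₀], the pointwise limit f(x) := lim_{n→∞} f_n(x) satisfies f(x) ≥ x − x₁. -/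
/-
Integrating `f_n' ≥ (n / Σ_n) f_n` gives `f_n(u) e^{n (w - u) / Σ_n(w)} ≤ f_n(w) ≤ M` for `u ≤ w`,
and `Σ_n(x) / n → f(x)` by Cesàro. The threshold `x₁` is the supremum of the zeros of `f`.

Below `x₁` there is `v > x` with `Σ_n(v) = o(n)`, and such bounds improve to the left: if
`Σ_n(t) ≤ n ε` for `n ≥ N`, then `f_n(t - h) ≤ M e^{-h/ε}` for `n ≥ N`, hence
`Σ_n(t - h) ≤ N M + n M e^{-h/ε}`. Descending a ladder with `q_i = q₀ 2^i`, steps `32 M / q_i`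
and bounds `Σ_n ≤ 32 M n / q_i²` for `n ≥ N₀ e^{q_i}` stays within `d = 64 M / q₀` of `v`. At
`w = v - 3d`, the rung with `N₀ e^{q_i} ≤ k < N₀ e^{q_{i+1}}` gives `f_k(w) ≤ M N₀² / k²`, so
`Σ_n(w)` is bounded and `f_n(x) ≤ M e^{-n (w - x) / C}`.

Above `x₁` the limit is positive, and `n → ∞` gives `f(u) e^{(w - u) / f(w)} ≤ f(w)`, so
`f(u) (w - u) ≤ f(w) (f(w) - f(u))`. Summed over a fine subdivision of `[u, w]` this yields
`f(w) - f(u) ≥ w - u`, whence `f(x) ≥ x - x₁`.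
-/

open Filter Set Finset Real Topology

theorem le_mul_exp_neg_of_mul_exp_le {a b x y : ℝ} (ha : 0 ≤ a) (hyx : y ≤ x)
    (h : a * exp x ≤ b) : a ≤ b * exp (-y) :=
  calc a = a * exp x * exp (-x) := by rw [mul_assoc, ← exp_add]; simp
    _ ≤ b * exp (-y) := by gcongr; exact le_trans (by positivity) h

theorem sq_le_two_mul_exp {q : ℝ} (hq : 0 ≤ q) : q ^ 2 ≤ 2 * exp q := by
  nlinarith [quadratic_le_exp_of_nonneg hq]

theorem exists_forall_ge_mul_exp_neg_le (M : ℝ) {c : ℝ} (hc : 0 < c) :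
    ∃ N : ℕ, ∀ n ≥ N, M * exp (-(c * n)) ≤ exp (-(c / 2 * n)) := by
  have hlim : Tendsto (fun n : ℕ => M * exp (-(c / 2 * n))) atTop (𝓝 0) := by
    simpa using (tendsto_exp_neg_atTop_nhds_zero.comp
      (tendsto_natCast_atTop_atTop.const_mul_atTop (half_pos hc))).const_mul M
  obtain ⟨N, hN⟩ := eventually_atTop.1 (hlim.eventually (ge_mem_nhds one_pos))
  refine ⟨N, fun n hn => ?_⟩
  calc M * exp (-(c * n)) = M * exp (-(c / 2 * n)) * exp (-(c / 2 * n)) := by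
        rw [mul_assoc, ← exp_add]; ring_nf
    _ ≤ 1 * exp (-(c / 2 * n)) := by gcongr; exact hN n hn
    _ = exp (-(c / 2 * n)) := one_mul _

theorem mul_div_add_le_sub_of_mul_le_mul_sub {A B c Δ : ℝ} (hc : 0 < c) (hcA : c ≤ A)
    (hAB : A ≤ B) (hΔ : 0 ≤ Δ) (h : A * Δ ≤ B * (B - A)) : Δ * (c / (c + Δ)) ≤ B - A := by
  rw [mul_div_assoc', div_le_iff₀ (by positivity)]
  rcases le_total (B - A) Δ with hD | hD <;> nlinarith

theorem sum_range_le_of_forall_ge_le {a : ℕ → ℝ} {M δ : ℝ} {N : ℕ} (hM : 0 ≤ M) (hδ : 0 ≤ δ)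
    (ha : ∀ k, a k ≤ M) (haN : ∀ k, N ≤ k → a k ≤ δ) (n : ℕ) :
    ∑ k ∈ range n, a k ≤ N * M + n * δ := by
  rcases le_total n N with hnN | hNn
  · calc ∑ k ∈ range n, a k ≤ n * M := by
          simpa using sum_le_card_nsmul (range _) _ _ fun k _ => ha k
      _ ≤ N * M + n * δ := by
        have : (n : ℝ) ≤ N := by exact_mod_cast hnN
        nlinarith [mul_nonneg (Nat.cast_nonneg n) hδ]
  · rw [← sum_range_add_sum_Ico _ hNn]
    have hhead : ∑ k ∈ range N, a k ≤ N * M := by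
      simpa using sum_le_card_nsmul (range _) _ _ fun k _ => ha k
    have htail : ∑ k ∈ Finset.Ico N n, a k ≤ n * δ :=
      calc ∑ k ∈ Finset.Ico N n, a k ≤ (Finset.Ico N n).card * δ := by
            simpa using sum_le_card_nsmul _ _ _ fun k hk => haN k (Finset.mem_Ico.1 hk).1
        _ ≤ n * δ := by gcongr; simp
    linarith

theorem sub_sum_range_div_two_pow_mem_Icc (v : ℝ) {a : ℝ} (ha : 0 ≤ a) (i : ℕ) :
    v - ∑ j ∈ range i, a / 2 ^ j ∈ Icc (v - 2 * a) v := by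
  have hsum : ∑ j ∈ range i, a / 2 ^ j ≤ 2 * a :=
    calc ∑ j ∈ range i, a / 2 ^ j = a * ∑ j ∈ range i, (1 / 2 : ℝ) ^ j := by
          rw [mul_sum]; congr 1 with j; rw [one_div_pow, mul_one_div]
      _ ≤ a * 2 := by gcongr; exact sum_geometric_two_le i
      _ = 2 * a := mul_comm _ _
  exact ⟨by linarith, by linarith [show 0 ≤ ∑ j ∈ range i, a / 2 ^ j by positivity]⟩

theorem exists_one_le_forall_sum_range_le_of_tendsto_zero {a : ℕ → ℝ}
    (hlim : Tendsto a atTop (𝓝 0)) {ε : ℝ} (hε : 0 < ε) :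
    ∃ N₀ : ℝ, 1 ≤ N₀ ∧ ∀ n : ℕ, N₀ ≤ n → ∑ k ∈ range n, a k ≤ n * ε := by
  obtain ⟨N, hN⟩ := eventually_atTop.1 (hlim.cesaro.eventually (ge_mem_nhds hε))
  refine ⟨max N 1, by simp, fun n hn => ?_⟩
  have hn' : max N 1 ≤ n := by exact_mod_cast hn
  have := hN n (le_of_max_le_left hn')
  rwa [inv_mul_le_iff₀ (by exact_mod_cast le_of_max_le_right hn')] at this

theorem le_div_sq_of_le_div_sq_succ {a T : ℕ → ℝ} {B : ℝ} (hB : 0 ≤ B) (hT₀ : 0 < T 0)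
    (hT : Tendsto T atTop atTop) (h : ∀ i (k : ℕ), T i ≤ k → a k ≤ B / T (i + 1) ^ 2)
    {k : ℕ} (hk : T 0 ≤ k) : a k ≤ B / (k : ℝ) ^ 2 := by
  classical
  have hex : ∃ i, (k : ℝ) < T (i + 1) :=
    ((tendsto_add_atTop_iff_nat 1).2 hT |>.eventually_gt_atTop (k : ℝ)).exists
  have hTk : T (Nat.find hex) ≤ k := by
    rcases hi : Nat.find hex with _ | i
    · exact hk
    · exact not_lt.1 (Nat.find_min hex (hi ▸ Nat.lt_succ_self i))
  calc a k ≤ B / T (Nat.find hex + 1) ^ 2 := h _ k hTk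
    _ ≤ B / (k : ℝ) ^ 2 := by
      have hk₀ : (0 : ℝ) < k := hT₀.trans_le hk
      have := Nat.find_spec hex
      gcongr

theorem sub_le_sub_of_mul_sub_le_mul_sub {g : ℝ → ℝ} {a b : ℝ} (hab : a ≤ b)
    (hg : MonotoneOn g (Icc a b)) (ha : 0 < g a)
    (h : ∀ s ∈ Icc a b, ∀ t ∈ Icc a b, s ≤ t → g s * (t - s) ≤ g t * (g t - g s)) :
    b - a ≤ g b - g a := by
  have hsub : ∀ m : ℕ, 0 < m → (b - a) * (g a / (g a + (b - a) / m)) ≤ g b - g a := by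
    intro m hm
    set Δ := (b - a) / m
    have hΔ : 0 ≤ Δ := div_nonneg (sub_nonneg.2 hab) m.cast_nonneg
    have hmΔ : m * Δ = b - a := mul_div_cancel₀ _ (by positivity)
    have hmem : ∀ j ≤ m, a + j * Δ ∈ Icc a b := fun j hj => by
      have : (j : ℝ) * Δ ≤ m * Δ := by gcongr
      constructor <;> nlinarith [mul_nonneg j.cast_nonneg hΔ]
    have hstep : ∀ j < m, Δ * (g a / (g a + Δ)) ≤ g (a + (j + 1 : ℕ) * Δ) - g (a + j * Δ) := by
      intro j hj
      have hj' := hmem j hj.le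
      have hj₁ := hmem (j + 1) hj
      have hle : a + j * Δ ≤ a + (j + 1 : ℕ) * Δ := by push_cast; linarith
      refine mul_div_add_le_sub_of_mul_le_mul_sub ha (hg (left_mem_Icc.2 hab) hj' hj'.1)
        (hg hj' hj₁ hle) hΔ ?_
      convert h _ hj' _ hj₁ hle using 2
      push_cast; ring
    calc (b - a) * (g a / (g a + Δ)) = ∑ j ∈ range m, Δ * (g a / (g a + Δ)) := by
          rw [sum_const, card_range, nsmul_eq_mul, ← mul_assoc, hmΔ]
      _ ≤ ∑ j ∈ range m, (g (a + (j + 1 : ℕ) * Δ) - g (a + j * Δ)) :=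
          sum_le_sum fun j hj => hstep j (mem_range.1 hj)
      _ = g b - g a := by
          rw [sum_range_sub (fun j => g (a + j * Δ)), hmΔ]; simp
  have hlim : Tendsto (fun m : ℕ => (b - a) * (g a / (g a + (b - a) / m))) atTop
      (𝓝 ((b - a) * (g a / (g a + 0)))) :=
    (tendsto_const_nhds.div ((tendsto_const_div_atTop_nhds_zero_nat (b - a)).const_add (g a))
      (by simpa using ha.ne')).const_mul _
  rw [add_zero, div_self ha.ne', mul_one] at hlim
  exact le_of_tendsto hlim (eventually_gt_atTop 0 |>.mono hsub)

theorem exists_threshold_of_subset_Icc {a b : ℝ} (hab : a ≤ b)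
    {Z : Set ℝ} (hZ : Z ⊆ Icc a b) :
    ∃ x₁ ∈ Icc a b, (∀ x, a ≤ x → x < x₁ → ∃ v ∈ Z, x < v) ∧ ∀ u, x₁ < u → u ∉ Z := by
  have hbdd : BddAbove (insert a Z) := ⟨b, by
    rintro y (rfl | hy)
    exacts [hab, (hZ hy).2]⟩
  refine ⟨sSup (insert a Z), ⟨le_csSup hbdd (mem_insert a Z), csSup_le ⟨a, mem_insert a Z⟩ ?_⟩,
    fun x hx hlt => ?_, fun u hu huZ => ?_⟩
  · rintro y (rfl | hy)
    exacts [hab, (hZ hy).2]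
  · obtain ⟨v, hv, hxv⟩ := exists_lt_of_lt_csSup ⟨a, mem_insert a Z⟩ hlt
    rcases hv with rfl | hv
    · exact absurd hx hxv.not_ge
    · exact ⟨v, hv, hxv⟩
  · exact hu.not_ge (le_csSup hbdd (mem_insert_of_mem a huZ))

theorem mul_exp_le_of_mul_le_deriv {F F' : ℝ → ℝ} {a b c : ℝ} (hab : a ≤ b)
    (hF : ∀ t ∈ Icc a b, HasDerivWithinAt F (F' t) (Icc a b) t)
    (hle : ∀ t ∈ Icc a b, c * F t ≤ F' t) :
    F a * exp (c * (b - a)) ≤ F b := by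
  have hmono : MonotoneOn (fun t => F t * exp (-(c * t))) (Icc a b) := by
    refine monotoneOn_of_hasDerivWithinAt_nonneg (f' := fun t => (F' t - c * F t) * exp (-(c * t)))
      (convex_Icc a b) ?_ (fun t ht => ?_) (fun t ht => ?_)
    · exact (HasDerivWithinAt.continuousOn hF).mul (by fun_prop)
    · have hexp : HasDerivAt (fun t => exp (-(c * t))) (exp (-(c * t)) * -(c * 1)) t :=
        ((hasDerivAt_id' t).const_mul c).neg.exp
      exact (((hF t (interior_subset ht)).mono interior_subset).mul
        hexp.hasDerivWithinAt).congr_deriv (by ring)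
    · have ht' := interior_subset ht
      exact mul_nonneg (sub_nonneg.2 (hle t ht')) (exp_pos _).le
  have h := hmono (left_mem_Icc.2 hab) (right_mem_Icc.2 hab) hab
  calc F a * exp (c * (b - a)) = F a * exp (-(c * a)) * exp (c * b) := by
        rw [mul_assoc, ← exp_add]; ring_nf
    _ ≤ F b * exp (-(c * b)) * exp (c * b) := by gcongr
    _ = F b := by rw [mul_assoc, ← exp_add]; simp

/-- The integrated form of `f_n' ≥ (n / Σ_n) f_n` on `s`. -/
def GrowsAtPartialSumRate (f : ℕ → ℝ → ℝ) (s : Set ℝ) : Prop :=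
  ∀ n, 1 ≤ n → ∀ u ∈ s, ∀ w ∈ s, u ≤ w →
    f n u * exp (n / (∑ k ∈ range n, f k w) * (w - u)) ≤ f n w

theorem growsAtPartialSumRate_of_mul_le_deriv {s : Set ℝ} [s.OrdConnected]
    {f f' : ℕ → ℝ → ℝ} (hf : ∀ n, ∀ x ∈ s, 0 ≤ f n x) (hmono : ∀ n, MonotoneOn (f n) s)
    (hderiv : ∀ n, ∀ x ∈ s, HasDerivWithinAt (f n) (f' n x) s x)
    (hpos : ∀ n, 1 ≤ n → ∀ x ∈ s, 0 < ∑ k ∈ range n, f k x)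
    (hineq : ∀ n, 1 ≤ n → ∀ x ∈ s, (n / ∑ k ∈ range n, f k x) * f n x ≤ f' n x) :
    GrowsAtPartialSumRate f s := by
  intro n hn u hu w hw huw
  have hsub : Icc u w ⊆ s := Set.Icc_subset s hu hw
  refine mul_exp_le_of_mul_le_deriv huw (fun t ht => (hderiv n t (hsub ht)).mono hsub)
    (fun t ht => le_trans ?_ (hineq n hn t (hsub ht)))
  have hsum : ∑ k ∈ range n, f k t ≤ ∑ k ∈ range n, f k w :=
    sum_le_sum fun k _ => hmono k (hsub ht) hw ht.2
  gcongr
  · exact hf n t (hsub ht)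
  · exact hpos n hn t (hsub ht)

section Ladder

variable {s : Set ℝ} {f : ℕ → ℝ → ℝ} {M : ℝ}

theorem le_mul_exp_of_sum_range_le (hrange : ∀ n, ∀ x ∈ s, f n x ∈ Icc 0 M)
    (hpos : ∀ n, 1 ≤ n → ∀ x ∈ s, 0 < ∑ k ∈ range n, f k x)
    (hgrowth : GrowsAtPartialSumRate f s)
    {n : ℕ} (hn : 1 ≤ n) {u w : ℝ} (hu : u ∈ s) (hw : w ∈ s) (huw : u ≤ w) {G : ℝ}
    (hG : ∑ k ∈ range n, f k w ≤ G) :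
    f n u ≤ M * exp (-(n / G * (w - u))) := by
  refine le_mul_exp_neg_of_mul_exp_le (hrange n u hu).1 ?_
    ((hgrowth n hn u hu w hw huw).trans (hrange n w hw).2)
  have := hpos n hn w hw
  gcongr

theorem sum_range_le_of_ladder_step (hM : 0 < M) (hrange : ∀ n, ∀ x ∈ s, f n x ∈ Icc 0 M)
    (hpos : ∀ n, 1 ≤ n → ∀ x ∈ s, 0 < ∑ k ∈ range n, f k x)
    (hgrowth : GrowsAtPartialSumRate f s)
    {N₀ q t : ℝ} (hN₀ : 1 ≤ N₀) (hq : 0 < q) (ht : t ∈ s) (ht' : t - 32 * M / q ∈ s)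
    (hS : ∀ n : ℕ, N₀ * exp q ≤ n → ∑ k ∈ range n, f k t ≤ n * (32 * M / q ^ 2))
    (n : ℕ) (hn : N₀ * exp (2 * q) ≤ n) :
    ∑ k ∈ range n, f k (t - 32 * M / q) ≤ n * (32 * M / (2 * q) ^ 2) := by
  have hNq : 1 ≤ N₀ * exp q := one_le_mul_of_one_le_of_one_le hN₀ (one_le_exp hq.le)
  have hfar : ∀ k, ⌈N₀ * exp q⌉₊ ≤ k → f k (t - 32 * M / q) ≤ M * exp (-q) := by
    intro k hk
    have hk : N₀ * exp q ≤ k := Nat.ceil_le.1 hk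
    have hk₁ : 1 ≤ k := by exact_mod_cast hNq.trans hk
    have hk₀ : (0 : ℝ) < k := by positivity
    convert le_mul_exp_of_sum_range_le hrange hpos hgrowth hk₁ ht' ht
      (by linarith [div_pos (mul_pos (by norm_num : (0:ℝ) < 32) hM) hq]) (hS k hk) using 3
    field_simp
    ring
  have hsum := sum_range_le_of_forall_ge_le hM.le (by positivity)
    (fun k => (hrange k _ ht').2) hfar n
  have hq2 := sq_le_two_mul_exp hq.le
  have hceil : (⌈N₀ * exp q⌉₊ : ℝ) ≤ 2 * (N₀ * exp q) := by
    linarith [Nat.ceil_lt_add_one (zero_le_one.trans hNq)]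
  have hexp2 : exp (2 * q) = exp q * exp q := by rw [← exp_add]; ring_nf
  have hhead : (⌈N₀ * exp q⌉₊ : ℝ) * M ≤ n * (4 * M / q ^ 2) := by
    rw [mul_div_assoc', le_div_iff₀ (by positivity)]
    calc (⌈N₀ * exp q⌉₊ : ℝ) * M * q ^ 2 ≤ 2 * (N₀ * exp q) * M * (2 * exp q) := by gcongr
      _ = 4 * M * (N₀ * exp (2 * q)) := by rw [hexp2]; ring
      _ ≤ 4 * M * n := by gcongr
      _ = n * (4 * M) := by ring
  have htail : M * exp (-q) ≤ 4 * M / q ^ 2 := by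
    rw [exp_neg, ← div_eq_mul_inv, div_le_div_iff₀ (exp_pos q) (by positivity)]
    nlinarith [exp_pos q]
  calc ∑ k ∈ range n, f k (t - 32 * M / q)
      ≤ ⌈N₀ * exp q⌉₊ * M + n * (M * exp (-q)) := hsum
    _ ≤ n * (4 * M / q ^ 2) + n * (4 * M / q ^ 2) := by gcongr
    _ = n * (32 * M / (2 * q) ^ 2) := by ring

theorem sum_range_le_of_ladder [s.OrdConnected] (hM : 0 < M)
    (hrange : ∀ n, ∀ x ∈ s, f n x ∈ Icc 0 M)
    (hpos : ∀ n, 1 ≤ n → ∀ x ∈ s, 0 < ∑ k ∈ range n, f k x)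
    (hgrowth : GrowsAtPartialSumRate f s)
    {N₀ q₀ v : ℝ} (hN₀ : 1 ≤ N₀) (hq₀ : 0 < q₀) (hv : v ∈ s) (hv' : v - 64 * M / q₀ ∈ s)
    (hS : ∀ n : ℕ, N₀ * exp q₀ ≤ n → ∑ k ∈ range n, f k v ≤ n * (32 * M / q₀ ^ 2)) (i : ℕ) :
    ∀ n : ℕ, N₀ * exp (q₀ * 2 ^ i) ≤ n →
      ∑ k ∈ range n, f k (v - ∑ j ∈ range i, 32 * M / q₀ / 2 ^ j) ≤
        n * (32 * M / (q₀ * 2 ^ i) ^ 2) := by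
  have hmem : ∀ i, v - ∑ j ∈ range i, 32 * M / q₀ / 2 ^ j ∈ s := fun i => by
    have h64 : 2 * (32 * M / q₀) = 64 * M / q₀ := by ring
    exact Set.Icc_subset s hv' hv
      (h64 ▸ sub_sum_range_div_two_pow_mem_Icc v (by positivity : 0 ≤ 32 * M / q₀) i)
  induction i with
  | zero => simpa using hS
  | succ i ih =>
    have hpt : v - ∑ j ∈ range (i + 1), 32 * M / q₀ / 2 ^ j =
        v - ∑ j ∈ range i, 32 * M / q₀ / 2 ^ j - 32 * M / (q₀ * 2 ^ i) := by
      rw [sum_range_succ, div_div]; ring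
    have hq : q₀ * 2 ^ (i + 1) = 2 * (q₀ * 2 ^ i) := by ring
    rw [hpt, hq]
    exact sum_range_le_of_ladder_step hM hrange hpos hgrowth hN₀ (by positivity) (hmem i)
      (hpt ▸ hmem (i + 1)) ih

theorem le_mul_exp_neg_four_mul_of_sum_range_le (hM : 0 < M)
    (hrange : ∀ n, ∀ x ∈ s, f n x ∈ Icc 0 M)
    (hpos : ∀ n, 1 ≤ n → ∀ x ∈ s, 0 < ∑ k ∈ range n, f k x)
    (hgrowth : GrowsAtPartialSumRate f s)
    {k : ℕ} (hk : 1 ≤ k) {q w t : ℝ} (hq : 0 < q) (hw : w ∈ s) (ht : t ∈ s)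
    (hwt : 128 * M / q ≤ t - w) (hS : ∑ j ∈ range k, f j t ≤ k * (32 * M / q ^ 2)) :
    f k w ≤ M * exp (-(4 * q)) := by
  have hk₀ : (0 : ℝ) < k := by positivity
  refine (le_mul_exp_of_sum_range_le hrange hpos hgrowth hk hw ht
    (by linarith [show 0 < 128 * M / q by positivity]) hS).trans ?_
  gcongr M * exp (-?_)
  rw [show (k : ℝ) / (k * (32 * M / q ^ 2)) = q ^ 2 / (32 * M) by field_simp]
  calc 4 * q = q ^ 2 / (32 * M) * (128 * M / q) := by field_simp; ring
    _ ≤ q ^ 2 / (32 * M) * (t - w) := by gcongr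

theorem summable_of_tendsto_zero [s.OrdConnected] (hM : 0 < M)
    (hrange : ∀ n, ∀ x ∈ s, f n x ∈ Icc 0 M)
    (hpos : ∀ n, 1 ≤ n → ∀ x ∈ s, 0 < ∑ k ∈ range n, f k x)
    (hgrowth : GrowsAtPartialSumRate f s)
    {v d : ℝ} (hd : 0 < d) (hv : v ∈ s) (hw : v - 3 * d ∈ s)
    (hlim : Tendsto (fun n => f n v) atTop (𝓝 0)) :
    Summable fun n => f n (v - 3 * d) := by
  obtain ⟨q₀, hq₀_def⟩ : ∃ q₀, q₀ = 64 * M / d := ⟨_, rfl⟩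
  have hq₀ : 0 < q₀ := by rw [hq₀_def]; positivity
  obtain ⟨N₀, hN₀, hS⟩ := exists_one_le_forall_sum_range_le_of_tendsto_zero hlim
    (by positivity : 0 < 32 * M / q₀ ^ 2)
  have hladder := sum_range_le_of_ladder hM hrange hpos hgrowth hN₀ hq₀ hv
    (by rw [hq₀_def, div_div_cancel₀ (by positivity)]
        exact Set.Icc_subset s hw hv ⟨by linarith, by linarith⟩)
    fun n hn => hS n ((le_mul_of_one_le_right (by linarith) (one_le_exp hq₀.le)).trans hn)
  set T : ℕ → ℝ := fun i => N₀ * exp (q₀ * 2 ^ i)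
  have hbound : ∀ i (k : ℕ), T i ≤ k → f k (v - 3 * d) ≤ M * N₀ ^ 2 / T (i + 1) ^ 2 := by
    intro i k hk
    have hk₁ : 1 ≤ k := by
      exact_mod_cast (one_le_mul_of_one_le_of_one_le hN₀ (one_le_exp (by positivity))).trans hk
    have ht : v - ∑ j ∈ range i, 32 * M / q₀ / 2 ^ j ∈ Icc (v - d) v := by
      have h2 : 2 * (32 * M / q₀) = d := by rw [hq₀_def]; field_simp; ring
      exact h2 ▸ sub_sum_range_div_two_pow_mem_Icc v (by positivity : 0 ≤ 32 * M / q₀) i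
    have hgap : 128 * M / (q₀ * 2 ^ i) ≤ 2 * d :=
      calc 128 * M / (q₀ * 2 ^ i) ≤ 128 * M / q₀ := by
            gcongr; exact le_mul_of_one_le_right hq₀.le (one_le_pow₀ one_le_two)
        _ = 2 * d := by rw [hq₀_def]; field_simp; ring
    calc f k (v - 3 * d) ≤ M * exp (-(4 * (q₀ * 2 ^ i))) :=
          le_mul_exp_neg_four_mul_of_sum_range_le hM hrange hpos hgrowth hk₁ (by positivity) hw
            (Set.Icc_subset s hw hv ⟨by linarith [ht.1], ht.2⟩) (by linarith [ht.1])
            (hladder i k hk)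
      _ = M * N₀ ^ 2 / T (i + 1) ^ 2 := by
          simp only [T]
          rw [mul_pow, ← exp_nat_mul, exp_neg]
          field_simp
          ring_nf
  have hT : Tendsto T atTop atTop :=
    (tendsto_exp_atTop.comp ((tendsto_pow_atTop_atTop_of_one_lt one_lt_two).const_mul_atTop
      hq₀)).const_mul_atTop (by linarith)
  refine Summable.of_norm_bounded_eventually_nat
    ((Real.summable_one_div_nat_pow.2 one_lt_two).mul_left (M * N₀ ^ 2)) ?_
  filter_upwards [eventually_ge_atTop ⌈T 0⌉₊] with k hk
  rw [Real.norm_of_nonneg (hrange k _ hw).1, mul_one_div]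
  exact le_div_sq_of_le_div_sq_succ (by positivity) (by positivity) hT hbound (Nat.ceil_le.1 hk)

theorem exists_exp_decay_of_tendsto_zero [s.OrdConnected] (hM : 0 < M)
    (hrange : ∀ n, ∀ x ∈ s, f n x ∈ Icc 0 M)
    (hpos : ∀ n, 1 ≤ n → ∀ x ∈ s, 0 < ∑ k ∈ range n, f k x)
    (hgrowth : GrowsAtPartialSumRate f s)
    {x v : ℝ} (hx : x ∈ s) (hv : v ∈ s) (hxv : x < v)
    (hlim : Tendsto (fun n => f n v) atTop (𝓝 0)) :
    ∃ c : ℝ, 0 < c ∧ ∃ N : ℕ, ∀ n ≥ N, f n x ≤ exp (-(c * n)) := by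
  set w := v - 3 * ((v - x) / 4)
  have hxw : x < w := by simp only [w]; linarith
  have hw : w ∈ s := Set.Icc_subset s hx hv ⟨hxw.le, by simp only [w]; linarith⟩
  have hsum := summable_of_tendsto_zero hM hrange hpos hgrowth (by linarith) hv hw hlim
  set C := ∑' k, f k w + 1
  have hC : 0 < C := by linarith [(tsum_nonneg fun k => (hrange k w hw).1 : 0 ≤ ∑' k, f k w)]
  obtain ⟨N, hN⟩ := exists_forall_ge_mul_exp_neg_le M (div_pos (sub_pos.2 hxw) hC)
  refine ⟨(w - x) / C / 2, by positivity, max N 1, fun n hn => ?_⟩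
  have hSC : ∑ k ∈ range n, f k w ≤ C :=
    (hsum.sum_le_tsum _ fun k _ => (hrange k w hw).1).trans (by linarith)
  calc f n x ≤ M * exp (-(n / C * (w - x))) :=
        le_mul_exp_of_sum_range_le hrange hpos hgrowth (le_of_max_le_right hn) hx hw hxw.le hSC
    _ = M * exp (-((w - x) / C * n)) := by ring_nf
    _ ≤ exp (-((w - x) / C / 2 * n)) := hN n (le_of_max_le_left hn)

end Ladder

section Limit

variable {s : Set ℝ} {f : ℕ → ℝ → ℝ} {l : ℝ → ℝ}

theorem limit_mul_exp_le
    (hl : ∀ x ∈ s, Tendsto (fun n => f n x) atTop (𝓝 (l x)))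
    (hgrowth : GrowsAtPartialSumRate f s)
    {u w : ℝ} (hu : u ∈ s) (hw : w ∈ s) (huw : u ≤ w) (hlw : l w ≠ 0) :
    l u * exp ((l w)⁻¹ * (w - u)) ≤ l w := by
  have hrate : Tendsto (fun n : ℕ => n / ∑ k ∈ range n, f k w) atTop (𝓝 (l w)⁻¹) := by
    convert (hl w hw).cesaro.inv₀ hlw using 2 with n
    rw [mul_inv, inv_inv, div_eq_mul_inv]
  refine le_of_tendsto_of_tendsto
    ((hl u hu).mul (hrate.mul_const (w - u)).rexp) (hl w hw) ?_
  filter_upwards [eventually_ge_atTop 1] with n hn using hgrowth n hn u hu w hw huw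

theorem sub_le_limit_sub_limit [s.OrdConnected]
    (hl : ∀ x ∈ s, Tendsto (fun n => f n x) atTop (𝓝 (l x)))
    (hmono : ∀ n, MonotoneOn (f n) s)
    (hgrowth : GrowsAtPartialSumRate f s)
    {a b : ℝ} (ha : a ∈ s) (hb : b ∈ s) (hab : a ≤ b) (hla : 0 < l a) :
    b - a ≤ l b - l a := by
  have hsub : Icc a b ⊆ s := Set.Icc_subset s ha hb
  have hlmono : MonotoneOn l (Icc a b) := fun x hx y hy hxy =>
    le_of_tendsto_of_tendsto' (hl x (hsub hx)) (hl y (hsub hy))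
      fun n => hmono n (hsub hx) (hsub hy) hxy
  refine sub_le_sub_of_mul_sub_le_mul_sub hab hlmono hla fun x hx y hy hxy => ?_
  have hlx : 0 < l x := hla.trans_le (hlmono (left_mem_Icc.2 hab) hx hx.1)
  have hly : 0 < l y := hlx.trans_le (hlmono hx hy hxy)
  have h := limit_mul_exp_le hl hgrowth (hsub hx) (hsub hy) hxy hly.ne'
  have h1 : l x * (1 + (l y)⁻¹ * (y - x)) ≤ l y :=
    le_trans (by gcongr; linarith [add_one_le_exp ((l y)⁻¹ * (y - x))]) h
  have h2 : l x * (l y + (y - x)) ≤ l y * l y := by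
    calc l x * (l y + (y - x)) = l x * (1 + (l y)⁻¹ * (y - x)) * l y := by field_simp
      _ ≤ l y * l y := by gcongr
  nlinarith

theorem sub_le_limit_of_forall_ne_zero [s.OrdConnected]
    (hf : ∀ n, ∀ x ∈ s, 0 ≤ f n x)
    (hl : ∀ x ∈ s, Tendsto (fun n => f n x) atTop (𝓝 (l x)))
    (hmono : ∀ n, MonotoneOn (f n) s)
    (hgrowth : GrowsAtPartialSumRate f s)
    {x₁ x : ℝ} (hx₁ : x₁ ∈ s) (hx : x ∈ s) (hx₁x : x₁ < x) (hne : ∀ u ∈ Ioc x₁ x, l u ≠ 0) :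
    x - x₁ ≤ l x := by
  have hpos : ∀ u ∈ Ioc x₁ x, 0 < l u := fun u hu =>
    (ge_of_tendsto' (hl u (Set.Icc_subset s hx₁ hx (Ioc_subset_Icc_self hu)))
      fun n => hf n u (Set.Icc_subset s hx₁ hx (Ioc_subset_Icc_self hu))).lt_of_ne (hne u hu).symm
  suffices x - l x ≤ x₁ by linarith
  refine le_of_forall_gt_imp_ge_of_dense fun u hu => ?_
  rcases lt_or_ge u x with hux | hxu
  · have := sub_le_limit_sub_limit hl hmono hgrowth
      (Set.Icc_subset s hx₁ hx ⟨hu.le, hux.le⟩) hx hux.le (hpos u ⟨hu, hux.le⟩)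
    linarith [hpos u ⟨hu, hux.le⟩]
  · linarith [hpos x ⟨hx₁x, le_rfl⟩]

end Limit

/-- **Analysis lemma for families of differential inequalities.**  Let
`f_n : [0,x₀] → [0,M]` be differentiable (with one-sided derivatives at the endpoints,
expressed via `HasDerivWithinAt` on `[0,x₀]`), nondecreasing functions, converging
pointwise on `[0,x₀]`, with `Σ_n(x) := Σ_{k<n} f_k(x) > 0` and satisfying the
differential inequality `f_n' ≥ (n/Σ_n) f_n` on `[0,x₀]` for all `n ≥ 1`.  Then there
exists `x₁ ∈ [0,x₀]` such that:
(P1) for every `x < x₁` there are `c_x > 0` and `N` with `f_n(x) ≤ exp(−c_x n)` for all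
`n ≥ N`; and
(P2) for every `x > x₁` the pointwise limit `f(x)` satisfies `f(x) ≥ x − x₁`. -/
theorem differential_inequality_sharp_threshold
    (x₀ M : ℝ) (hx₀ : 0 < x₀) (hM : 0 < M)
    (f f' : ℕ → ℝ → ℝ)
    (hrange : ∀ n : ℕ, ∀ x ∈ Set.Icc (0 : ℝ) x₀, f n x ∈ Set.Icc (0 : ℝ) M)
    (hmono : ∀ n : ℕ, MonotoneOn (f n) (Set.Icc (0 : ℝ) x₀))
    (hderiv : ∀ n : ℕ, ∀ x ∈ Set.Icc (0 : ℝ) x₀,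
      HasDerivWithinAt (f n) (f' n x) (Set.Icc (0 : ℝ) x₀) x)
    (hconv : ∀ x ∈ Set.Icc (0 : ℝ) x₀,
      ∃ L : ℝ, Filter.Tendsto (fun n => f n x) Filter.atTop (nhds L))
    (hpos : ∀ n : ℕ, 1 ≤ n → ∀ x ∈ Set.Icc (0 : ℝ) x₀,
      0 < ∑ k ∈ Finset.range n, f k x)
    (hineq : ∀ n : ℕ, 1 ≤ n → ∀ x ∈ Set.Icc (0 : ℝ) x₀,
      ((n : ℝ) / ∑ k ∈ Finset.range n, f k x) * f n x ≤ f' n x) :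
    ∃ x₁ ∈ Set.Icc (0 : ℝ) x₀,
      (∀ x ∈ Set.Icc (0 : ℝ) x₀, x < x₁ →
        ∃ c : ℝ, 0 < c ∧ ∃ N : ℕ, ∀ n ≥ N, f n x ≤ Real.exp (-(c * n))) ∧
      (∀ x ∈ Set.Icc (0 : ℝ) x₀, x₁ < x →
        ∀ L : ℝ, Filter.Tendsto (fun n => f n x) Filter.atTop (nhds L) →
          x - x₁ ≤ L) := by
  choose! l hl using hconv
  have hf : ∀ n, ∀ x ∈ Icc 0 x₀, 0 ≤ f n x := fun n x hx => (hrange n x hx).1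
  have hgrowth := growsAtPartialSumRate_of_mul_le_deriv hf hmono hderiv hpos hineq
  obtain ⟨x₁, hx₁, hbelow, habove⟩ :=
    exists_threshold_of_subset_Icc hx₀.le (sep_subset (Icc 0 x₀) fun x => l x = 0)
  refine ⟨x₁, hx₁, fun x hx hlt => ?_, fun x hx hlt L hL => ?_⟩
  · obtain ⟨v, ⟨hv, hlv⟩, hxv⟩ := hbelow x hx.1 hlt
    exact exists_exp_decay_of_tendsto_zero hM hrange hpos hgrowth hx hv hxv (hlv ▸ hl v hv)
  · rw [tendsto_nhds_unique hL (hl x hx)]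
    exact sub_le_limit_of_forall_ne_zero hf hl hmono hgrowth hx₁ hx hlt
      fun u hu hlu => habove u hu.1 ⟨⟨hx₁.1.trans hu.1.le, hu.2.trans hx.2⟩, hlu⟩
end
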